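/- arXiv:2306.05826 — 7 statements merged into one kernel-verified Lean document; each statement's English description precedes it below -/
import Mathlib

section
/- Any morphism of Banach spaces over a nonarchimedean field with finite-dimensional cokernel is strict, i.e., the subspace and quotient topologies on its image coincide. -/
/-- A continuous linear map between (semi)normed spaces is *strict* if the subspace
topology and the quotient topology on its image coincide; since the corestriction
`V → image f` is always continuous (so the subspace topology is coarser than the
quotient topology), this is equivalent to saying that the corestriction of `f` to its
image is an open map onto the image with its subspace topology. -/
def IsStrict {R V W : Type*} [Semiring R] [SeminormedAddCommGroup V]
    [SeminormedAddCommGroup W] [Module R V] [Module R W] (f : V →L[R] W) : Prop :=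
  ∀ U : Set V, IsOpen U → ∃ O : Set W, IsOpen O ∧ O ∩ Set.range f = f '' U

namespace StrictAux

open UniformSpace Set Filter

variable {K : Type*} [NontriviallyNormedField K]

/-- Any normed field is a completable topological field. -/
instance (priority := 100) : CompletableTopField K := by
  refine { toT0Space := inferInstance, nice := fun F F_cau hF => ?_ }
  obtain ⟨U, hU, A, hA, hUA⟩ := inf_eq_bot_iff.1 hF
  obtain ⟨ε, hε, hball⟩ := Metric.mem_nhds_iff.1 hU
  have hAnorm : ∀ x ∈ A, ε ≤ ‖x‖ := by
    intro x hx
    by_contra h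
    push_neg at h
    have hxU : x ∈ U := hball (by simpa [Metric.mem_ball, dist_zero_right] using h)
    have : x ∈ U ∩ A := ⟨hxU, hx⟩
    simp [hUA] at this
  rw [Metric.cauchy_iff] at F_cau ⊢
  refine ⟨F_cau.1.map _, fun δ hδ => ?_⟩
  obtain ⟨B, hB, hBd⟩ := F_cau.2 (δ * ε ^ 2) (by positivity)
  refine ⟨_, image_mem_map (inter_mem hA hB), ?_⟩
  rintro _ ⟨x, ⟨hxA, hxB⟩, rfl⟩ _ ⟨y, ⟨hyA, hyB⟩, rfl⟩
  have hxε : ε ≤ ‖x‖ := hAnorm x hxA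
  have hyε : ε ≤ ‖y‖ := hAnorm y hyA
  have hx0 : x ≠ 0 := fun h => by simp [h] at hxε; linarith
  have hy0 : y ≠ 0 := fun h => by simp [h] at hyε; linarith
  have hd := hBd x hxB y hyB
  rw [dist_eq_norm] at hd ⊢
  have hxy : x⁻¹ - y⁻¹ = (y - x) * (x⁻¹ * y⁻¹) := by
    field_simp
  rw [hxy, norm_mul, norm_mul, norm_inv, norm_inv, norm_sub_rev]
  have hxpos : (0:ℝ) < ‖x‖ := lt_of_lt_of_le hε hxε
  have hypos : (0:ℝ) < ‖y‖ := lt_of_lt_of_le hε hyε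
  have h1 : ‖x‖⁻¹ ≤ ε⁻¹ := by
    exact inv_anti₀ hε hxε
  have h2 : ‖y‖⁻¹ ≤ ε⁻¹ := by
    exact inv_anti₀ hε hyε
  calc ‖x - y‖ * (‖x‖⁻¹ * ‖y‖⁻¹) < δ * ε ^ 2 * (‖x‖⁻¹ * ‖y‖⁻¹) := by
        apply mul_lt_mul_of_pos_right hd
        positivity
    _ ≤ δ * ε ^ 2 * (ε⁻¹ * ε⁻¹) := by
        apply mul_le_mul_of_nonneg_left _ (by positivity)
        apply mul_le_mul h1 h2 (by positivity) (by positivity)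
    _ = δ := by
        rw [← mul_inv, ← sq, mul_assoc, mul_inv_cancel₀ (by positivity : (ε:ℝ)^2 ≠ 0), mul_one]

noncomputable instance : NontriviallyNormedField (Completion K) :=
  { (inferInstance : NormedField (Completion K)) with
    non_trivial := by
      obtain ⟨x, hx⟩ := NontriviallyNormedField.non_trivial (α := K)
      exact ⟨(x : Completion K), by rwa [Completion.norm_coe]⟩ }

variable (K)
variable {E : Type*} [NormedAddCommGroup E] [NormedSpace K E] [CompleteSpace E]
variable {E' : Type*} [NormedAddCommGroup E'] [NormedSpace K E'] [CompleteSpace E']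

/-- The continuous `K`-linear extension of `q ↦ q • y` to the completion of `K`. -/
noncomputable def extScalar (y : E) : Completion K →L[K] E :=
  (ContinuousLinearMap.toSpanSingleton K y).extend (Completion.toComplL (𝕜 := K) (E := K))

theorem extScalar_coe (y : E) (q : K) : extScalar K y (q : Completion K) = q • y := by
  have := ContinuousLinearMap.extend_eq (ContinuousLinearMap.toSpanSingleton K y)
    (e := Completion.toComplL (𝕜 := K) (E := K)) Completion.denseRange_coe
    ((Completion.toComplₗᵢ (𝕜 := K) (E := K)).isometry.isUniformInducing) q
  simpa [extScalar, ContinuousLinearMap.toSpanSingleton_apply] using this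

theorem smul_eq_coe_mul (q : K) (c : Completion K) :
    q • c = (q : Completion K) * c := by
  refine Completion.induction_on c ?_ ?_
  · exact isClosed_eq (continuous_const_smul q) (continuous_mul_left _)
  · intro r
    rw [← Completion.coe_smul, smul_eq_mul, Completion.coe_mul]

theorem extScalar_mul (y : E) (c a : Completion K) :
    extScalar K y (a * c) = extScalar K (extScalar K y c) a := by
  have h := Completion.denseRange_coe (α := K)
  have := h.equalizer (g := fun a => extScalar K y (a * c))
    (h := fun a => extScalar K (extScalar K y c) a)
    ((extScalar K y).continuous.comp (continuous_mul_right c))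
    (extScalar K (extScalar K y c)).continuous ?_
  · exact congrFun this a
  · funext q
    simp only [Function.comp_apply]
    rw [← smul_eq_coe_mul, map_smul, extScalar_coe]

theorem extScalar_map (f : E →L[K] E') (v : E) (a : Completion K) :
    f (extScalar K v a) = extScalar K (f v) a := by
  have h := Completion.denseRange_coe (α := K)
  have := h.equalizer (g := fun a => f (extScalar K v a))
    (h := fun a => extScalar K (f v) a)
    (f.continuous.comp (extScalar K v).continuous)
    (extScalar K (f v)).continuous ?_
  · exact congrFun this a
  · funext q
    simp only [Function.comp_apply, extScalar_coe, map_smul]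

theorem extScalar_zero (a : Completion K) : extScalar K (0 : E) a = 0 := by
  have h := Completion.denseRange_coe (α := K)
  have := h.equalizer (g := fun a => extScalar K (0 : E) a)
    (h := fun _ => (0 : E)) (extScalar K (0 : E)).continuous continuous_const ?_
  · exact congrFun this a
  · funext q
    simp [extScalar_coe]

theorem extScalar_add (x z : E) (a : Completion K) :
    extScalar K (x + z) a = extScalar K x a + extScalar K z a := by
  have h := Completion.denseRange_coe (α := K)
  have := h.equalizer (g := fun a => extScalar K (x + z) a)
    (h := fun a => extScalar K x a + extScalar K z a)
    (extScalar K (x + z)).continuous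
    (((extScalar K x).continuous).add (extScalar K z).continuous) ?_
  · exact congrFun this a
  · funext q
    simp [extScalar_coe, smul_add]

theorem extScalar_sum {ι : Type*} (s : Finset ι) (g : ι → E) (a : Completion K) :
    extScalar K (∑ i ∈ s, g i) a = ∑ i ∈ s, extScalar K (g i) a := by
  classical
  induction s using Finset.induction_on with
  | empty => simp [extScalar_zero]
  | insert _ _ hx ih =>
      rw [Finset.sum_insert hx, Finset.sum_insert hx, extScalar_add, ih]

end StrictAux

open UniformSpace Set StrictAux

/-- Any morphism of Banach spaces over a nonarchimedean field with
finite-dimensional cokernel is strict. -/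
theorem strict_of_finiteDimensional_cokernel
    {K : Type*} [NontriviallyNormedField K] [IsUltrametricDist K]
    {V V' : Type*} [NormedAddCommGroup V] [NormedSpace K V] [CompleteSpace V]
    [IsUltrametricDist V]
    [NormedAddCommGroup V'] [NormedSpace K V'] [CompleteSpace V'] [IsUltrametricDist V']
    (f : V →L[K] V')
    (hcoker : FiniteDimensional K (V' ⧸ LinearMap.range (f : V →ₗ[K] V'))) :
    IsStrict f := by
  classical
  set p := LinearMap.range (f : V →ₗ[K] V') with hp
  -- choose lifts of a basis of the cokernel
  set n := Module.finrank K (V' ⧸ p) with hn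
  let b : Module.Basis (Fin n) K (V' ⧸ p) := Module.finBasis K (V' ⧸ p)
  have hy : ∀ i : Fin n, ∃ y : V', Submodule.Quotient.mk y = b i := fun i =>
    Submodule.Quotient.mk_surjective p (b i)
  choose y hy using hy
  -- the auxiliary Banach space map `g : V × (Fin n → K̂) → V'`
  let S : (Fin n → Completion K) →L[K] V' :=
    ∑ i : Fin n, (extScalar K (y i)).comp (ContinuousLinearMap.proj i)
  have hS : ∀ c : Fin n → Completion K, S c = ∑ i : Fin n, extScalar K (y i) (c i) := by
    intro c
    simp [S, ContinuousLinearMap.sum_apply]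
  let g : V × (Fin n → Completion K) →L[K] V' :=
    f.comp (ContinuousLinearMap.fst K V (Fin n → Completion K)) +
      S.comp (ContinuousLinearMap.snd K V (Fin n → Completion K))
  have hg : ∀ v c, g (v, c) = f v + S c := fun v c => rfl
  have hgsurj : Function.Surjective g := by
    intro x
    have hmem : x - ∑ i : Fin n, (b.repr (Submodule.Quotient.mk x)) i • y i ∈ p := by
      rw [← Submodule.Quotient.mk_eq_zero]
      have : (Submodule.Quotient.mk (∑ i : Fin n, (b.repr (Submodule.Quotient.mk x)) i • y i)
          : V' ⧸ p) = ∑ i : Fin n, (b.repr (Submodule.Quotient.mk x)) i • b i := by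
        rw [← Submodule.mkQ_apply, map_sum]
        simp [Submodule.mkQ_apply, hy]
      rw [← Submodule.mkQ_apply, map_sub, Submodule.mkQ_apply, Submodule.mkQ_apply, this,
        b.sum_repr]
      simp
    obtain ⟨v, hv⟩ := hmem
    refine ⟨(v, fun i => ((b.repr (Submodule.Quotient.mk x)) i : K)), ?_⟩
    rw [hg, hS]
    simp only [extScalar_coe]
    rw [show f v = x - ∑ i : Fin n, (b.repr (Submodule.Quotient.mk x)) i • y i from hv]
    abel
  have hgopen : IsOpenMap g := g.isOpenMap hgsurj
  -- the saturation submodule over the completed field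
  have hkey : ∀ (a : Completion K) (c : Fin n → Completion K), S c ∈ p → S (a • c) ∈ p := by
    intro a c hc
    have h1 : S (a • c) = extScalar K (S c) a := by
      rw [hS, hS]
      have : ∀ i : Fin n, extScalar K (y i) ((a • c) i)
          = extScalar K (extScalar K (y i) (c i)) a := by
        intro i
        rw [Pi.smul_apply, smul_eq_mul, extScalar_mul]
      rw [Finset.sum_congr rfl fun i _ => this i, ← extScalar_sum]
    obtain ⟨v, hv⟩ := hc
    rw [h1, ← show f v = S c from hv, ← extScalar_map]
    exact ⟨extScalar K v a, rfl⟩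
  let Z : Submodule (Completion K) (Fin n → Completion K) :=
    { carrier := {c | S c ∈ p}
      add_mem' := fun {c} {c'} hc hc' => by
        simp only [Set.mem_setOf_eq, map_add] at *
        exact add_mem hc hc'
      zero_mem' := by simp only [Set.mem_setOf_eq, map_zero]; exact zero_mem p
      smul_mem' := fun a c hc => hkey a c hc }
  have hZclosed : IsClosed (Z : Set (Fin n → Completion K)) :=
    Submodule.closed_of_finiteDimensional Z
  -- the range of f is closed
  have hclosed : IsClosed (p : Set V') := by
    rw [← isOpen_compl_iff]
    have himage : g '' (Set.univ ×ˢ (Z : Set (Fin n → Completion K)))ᶜ = (p : Set V')ᶜ := by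
      apply Set.eq_of_subset_of_subset
      · rintro _ ⟨⟨v, c⟩, hmem, rfl⟩
        simp only [Set.compl_prod_eq_union, Set.mem_union, Set.mem_prod, Set.mem_univ,
          Set.mem_compl_iff] at hmem
        intro hcon
        rcases hmem with h | h
        · exact h.1 trivial
        · apply h.2
          have : S c ∈ p := by
            have : f v ∈ p := ⟨v, rfl⟩
            have h2 : f v + S c ∈ p := by rwa [hg] at hcon
            simpa using sub_mem h2 this
          exact this
      · intro x hx
        obtain ⟨⟨v, c⟩, hvc⟩ := hgsurj x
        refine ⟨(v, c), ?_, hvc⟩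
        simp only [Set.mem_compl_iff, Set.mem_prod, Set.mem_univ, true_and]
        intro hcZ
        apply hx
        rw [← hvc, hg]
        exact add_mem (⟨v, rfl⟩ : f v ∈ p) hcZ
    rw [← himage]
    apply hgopen
    rw [isOpen_compl_iff]
    exact isClosed_univ.prod hZclosed
  -- conclude via the open mapping theorem for the corestriction
  haveI : CompleteSpace p := hclosed.completeSpace_coe
  let f' : V →L[K] p := f.codRestrict p fun v => LinearMap.mem_range_self _ v
  have hf'surj : Function.Surjective f' := by
    rintro ⟨x, hx⟩
    obtain ⟨v, hv⟩ := hx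
    exact ⟨v, Subtype.ext hv⟩
  have hf'open : IsOpenMap f' := f'.isOpenMap hf'surj
  intro U hU
  have hopen : IsOpen (f' '' U) := hf'open U hU
  rw [isOpen_induced_iff] at hopen
  obtain ⟨O, hO, hOeq⟩ := hopen
  refine ⟨O, hO, ?_⟩
  apply Set.eq_of_subset_of_subset
  · rintro x ⟨hxO, v, hv⟩
    have hxp : x ∈ p := ⟨v, hv⟩
    have : (⟨x, hxp⟩ : p) ∈ Subtype.val ⁻¹' O := hxO
    rw [hOeq] at this
    obtain ⟨u, hu, huv⟩ := this
    exact ⟨u, hu, congrArg Subtype.val huv⟩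
  · rintro _ ⟨u, hu, rfl⟩
    constructor
    · have : f' u ∈ f' '' U := ⟨u, hu, rfl⟩
      rw [← hOeq] at this
      exact this
    · exact ⟨u, rfl⟩
end

section
/- If V^• is a complex of Banach spaces over a nonarchimedean field K such that every cohomology group H^i(V^•) is finite-dimensional over K, then the complex V^• is strict, i.e., each differential d^i : V^i → V^{i+1} is a strict morphism. -/
open UniformSpace Filter Set

section CTF

variable {K : Type*} [NontriviallyNormedField K]

instance (priority := 50) NormedField.toCompletableTopField : CompletableTopField K where
  nice F hF h0 := by
    rcases Metric.cauchy_iff.1 hF with ⟨hne, hsmall⟩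
    obtain ⟨U, hU, V, hV, hUV⟩ := inf_eq_bot_iff.1 h0
    obtain ⟨ε, hε, hball⟩ := Metric.mem_nhds_iff.1 hU
    have hVnorm : ∀ x ∈ V, ε ≤ ‖x‖ := by
      intro x hx
      by_contra h
      push_neg at h
      have : x ∈ U := hball (by simpa [Metric.mem_ball, dist_zero_right] using h)
      exact absurd (hUV ▸ Set.mem_inter this hx : x ∈ (∅ : Set K)) (Set.notMem_empty x)
    refine Metric.cauchy_iff.2 ⟨map_neBot, fun δ hδ => ?_⟩
    obtain ⟨t, htF, ht⟩ := hsmall (δ * (ε * ε)) (by positivity)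
    refine ⟨_, image_mem_map (inter_mem htF hV), ?_⟩
    rintro _ ⟨x, ⟨hxt, hxV⟩, rfl⟩ _ ⟨y, ⟨hyt, hyV⟩, rfl⟩
    have hx : ε ≤ ‖x‖ := hVnorm _ hxV
    have hy : ε ≤ ‖y‖ := hVnorm _ hyV
    have hx0 : x ≠ 0 := by intro h; rw [h, norm_zero] at hx; linarith
    have hy0 : y ≠ 0 := by intro h; rw [h, norm_zero] at hy; linarith
    have key : x⁻¹ - y⁻¹ = (y - x) / (x * y) := by field_simp
    have hd : dist x⁻¹ y⁻¹ = ‖y - x‖ / (‖x‖ * ‖y‖) := by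
      rw [dist_eq_norm, key, norm_div, norm_mul]
    rw [hd]
    have h1 : ‖y - x‖ < δ * (ε * ε) := by
      rw [← dist_eq_norm]; exact ht y hyt x hxt
    have h2 : ε * ε ≤ ‖x‖ * ‖y‖ := by
      calc ε * ε ≤ ‖x‖ * ε := by nlinarith
        _ ≤ ‖x‖ * ‖y‖ := by nlinarith
    calc ‖y - x‖ / (‖x‖ * ‖y‖) ≤ ‖y - x‖ / (ε * ε) := by
          apply div_le_div_of_nonneg_left (norm_nonneg _) (by positivity) h2
      _ < δ := by rw [div_lt_iff₀ (by positivity)]; linarith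

noncomputable instance : NontriviallyNormedField (Completion K) :=
  { (inferInstance : NormedField (Completion K)) with
    non_trivial := by
      obtain ⟨x, hx⟩ := NontriviallyNormedField.non_trivial (α := K)
      exact ⟨(x : Completion K), by rwa [Completion.norm_coe]⟩ }

end CTF

section CSmul

set_option linter.unusedSectionVars false

variable {K : Type*} [NontriviallyNormedField K]
variable {V : Type*} [NormedAddCommGroup V] [NormedSpace K V] [CompleteSpace V]

theorem uc_smul (x : V) : UniformContinuous fun c : K => c • x := by
  refine (LipschitzWith.of_dist_le_mul (K := ‖x‖₊) fun a b => ?_).uniformContinuous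
  rw [dist_eq_norm, ← sub_smul, norm_smul, ← dist_eq_norm, coe_nnnorm]
  exact le_of_eq (mul_comm _ _)

noncomputable def csmul (a : Completion K) (x : V) : V :=
  Completion.extension (fun c : K => c • x) a

theorem csmul_coe (a : K) (x : V) : csmul (a : Completion K) x = a • x :=
  Completion.extension_coe (uc_smul x) a

theorem continuous_csmul (x : V) : Continuous (csmul · x : Completion K → V) :=
  Completion.continuous_extension

theorem csmul_add (a : Completion K) (x y : V) :
    csmul a (x + y) = csmul a x + csmul a y := by
  induction a using Completion.induction_on with
  | hp => exact isClosed_eq (continuous_csmul _) ((continuous_csmul x).add (continuous_csmul y))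
  | ih a => simp only [csmul_coe, smul_add]

theorem csmul_zero (a : Completion K) : csmul a (0 : V) = 0 := by
  induction a using Completion.induction_on with
  | hp => exact isClosed_eq (continuous_csmul _) continuous_const
  | ih a => simp only [csmul_coe, smul_zero]

theorem csmul_neg (a : Completion K) (x : V) : csmul a (-x) = -csmul a x := by
  induction a using Completion.induction_on with
  | hp => exact isClosed_eq (continuous_csmul _) (continuous_csmul x).neg
  | ih a => simp only [csmul_coe, smul_neg]

theorem csmul_sub (a : Completion K) (x y : V) :
    csmul a (x - y) = csmul a x - csmul a y := by
  rw [sub_eq_add_neg, csmul_add, csmul_neg, sub_eq_add_neg]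

theorem norm_csmul (a : Completion K) (x : V) : ‖csmul a x‖ = ‖a‖ * ‖x‖ := by
  induction a using Completion.induction_on with
  | hp =>
    exact isClosed_eq (continuous_norm.comp (continuous_csmul x))
      (continuous_norm.mul continuous_const)
  | ih a => rw [csmul_coe, norm_smul, Completion.norm_coe]

theorem continuous_csmul_right (a : Completion K) : Continuous (csmul a : V → V) := by
  refine (LipschitzWith.of_dist_le_mul (K := ‖a‖₊) fun x y => ?_).continuous
  rw [dist_eq_norm, ← csmul_sub, norm_csmul, ← dist_eq_norm, coe_nnnorm]

theorem add_csmul (a b : Completion K) (x : V) :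
    csmul (a + b) x = csmul a x + csmul b x := by
  induction a, b using Completion.induction_on₂ with
  | hp =>
    exact isClosed_eq ((continuous_csmul x).comp continuous_add)
      (((continuous_csmul x).comp continuous_fst).add ((continuous_csmul x).comp continuous_snd))
  | ih a b => rw [← Completion.coe_add, csmul_coe, csmul_coe, csmul_coe, add_smul]

theorem mul_csmul_coe (a : Completion K) (b : K) (x : V) :
    csmul (a * (b : Completion K)) x = csmul a (b • x) := by
  induction a using Completion.induction_on with
  | hp =>
    exact isClosed_eq ((continuous_csmul x).comp (continuous_id.mul continuous_const))
      (continuous_csmul _)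
  | ih a => rw [← Completion.coe_mul, csmul_coe, csmul_coe, mul_smul]

theorem mul_csmul (a b : Completion K) (x : V) :
    csmul (a * b) x = csmul a (csmul b x) := by
  induction b using Completion.induction_on with
  | hp =>
    exact isClosed_eq ((continuous_csmul x).comp (continuous_const.mul continuous_id))
      ((continuous_csmul_right a).comp (continuous_csmul x))
  | ih b => rw [mul_csmul_coe, csmul_coe]

noncomputable def completionNormedSpace : NormedSpace (Completion K) V where
  smul := csmul
  one_smul x := by
    show csmul 1 x = x
    rw [← Completion.coe_one, csmul_coe, one_smul]
  mul_smul a b x := mul_csmul a b x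
  smul_zero a := csmul_zero a
  smul_add a x y := csmul_add a x y
  add_smul a b x := add_csmul a b x
  zero_smul x := by
    show csmul 0 x = 0
    rw [← Completion.coe_zero, csmul_coe, zero_smul]
  norm_smul_le a x := le_of_eq (norm_csmul a x)

end CSmul

section Key

variable {K : Type*} [NontriviallyNormedField K]

set_option maxHeartbeats 2000000 in
theorem isClosed_range_of_finiteDimensional_coker
    {A B C : Type*} [NormedAddCommGroup A] [NormedSpace K A] [CompleteSpace A]
    [NormedAddCommGroup B] [NormedSpace K B] [CompleteSpace B]
    [NormedAddCommGroup C] [NormedSpace K C] [CompleteSpace C]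
    (f : A →L[K] B) (g : B →L[K] C) (hfg : ∀ x, g (f x) = 0)
    (hfin : FiniteDimensional K
      (↥(LinearMap.ker (g : B →ₗ[K] C)) ⧸
        Submodule.comap (LinearMap.ker (g : B →ₗ[K] C)).subtype
          (LinearMap.range (f : A →ₗ[K] B)))) :
    IsClosed (Set.range f) := by
  letI nsA : NormedSpace (Completion K) A := completionNormedSpace
  letI nsB : NormedSpace (Completion K) B := completionNormedSpace
  letI nsC : NormedSpace (Completion K) C := completionNormedSpace
  have hcoe : ∀ (c : K) (x : B), (c : Completion K) • x = c • x := fun c x => csmul_coe c x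
  have hfsmul : ∀ (a : Completion K) (x : A), f (a • x) = a • (f x) := by
    intro a x
    show f (csmul a x) = csmul a (f x)
    induction a using Completion.induction_on with
    | hp => exact isClosed_eq (f.continuous.comp (continuous_csmul x)) (continuous_csmul (f x))
    | ih a => rw [csmul_coe, csmul_coe, map_smul]
  have hgsmul : ∀ (a : Completion K) (x : B), g (a • x) = a • (g x) := by
    intro a x
    show g (csmul a x) = csmul a (g x)
    induction a using Completion.induction_on with
    | hp => exact isClosed_eq (g.continuous.comp (continuous_csmul x)) (continuous_csmul (g x))
    | ih a => rw [csmul_coe, csmul_coe, map_smul]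
  let f' : A →L[Completion K] B :=
    { toFun := ⇑f, map_add' := map_add f, map_smul' := hfsmul, cont := f.continuous }
  let g' : B →L[Completion K] C :=
    { toFun := ⇑g, map_add' := map_add g, map_smul' := hgsmul, cont := g.continuous }
  set N : Submodule (Completion K) B := LinearMap.ker (g' : B →ₗ[Completion K] C) with hN
  have hNclosed : IsClosed (N : Set B) := by
    have : (N : Set B) = ⇑g ⁻¹' {0} := rfl
    rw [this]
    exact isClosed_singleton.preimage g.continuous
  haveI : CompleteSpace ↥N := hNclosed.completeSpace_coe
  let f₂ : A →L[Completion K] ↥N :=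
    f'.codRestrict N (fun x => LinearMap.mem_ker.2 (hfg x))
  set R : Submodule (Completion K) ↥N := LinearMap.range (f₂ : A →ₗ[Completion K] ↥N) with hR
  set NK : Submodule K B := LinearMap.ker (g : B →ₗ[K] C) with hNK
  set RK : Submodule K ↥NK :=
    Submodule.comap NK.subtype (LinearMap.range (f : A →ₗ[K] B)) with hRK
  haveI := hfin
  obtain ⟨n, v, hv⟩ := Module.Finite.exists_fin (R := K) (M := ↥NK ⧸ RK)
  choose w hw using fun j => Submodule.Quotient.mk_surjective RK (v j)
  let z : Fin n → ↥N := fun j => ⟨(w j).1, (w j).2⟩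
  haveI : Module.Finite (Completion K) (↥N ⧸ R) := by
    rw [Module.finite_def]
    refine Submodule.fg_def.2
      ⟨Set.range (fun j => Submodule.Quotient.mk (p := R) (z j)), Set.finite_range _, ?_⟩
    rw [eq_top_iff]
    rintro q -
    obtain ⟨x, rfl⟩ := Submodule.Quotient.mk_surjective R q
    have hxNK : x.1 ∈ NK := x.2
    set xK : ↥NK := ⟨x.1, hxNK⟩ with hxK
    have hx : Submodule.Quotient.mk (p := RK) xK ∈ Submodule.span K (Set.range v) := by
      rw [hv]; trivial
    obtain ⟨c, hc⟩ := (Submodule.mem_span_range_iff_exists_fun K).1 hx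
    have hmk : Submodule.Quotient.mk (p := RK) (∑ j, c j • w j)
        = Submodule.Quotient.mk (p := RK) xK := by
      rw [← RK.mkQ_apply, map_sum]
      simpa only [Submodule.mkQ_apply, map_smul, hw] using hc
    have hsub : xK - ∑ j, c j • w j ∈ RK := (Submodule.Quotient.eq RK).1 hmk.symm
    obtain ⟨a, ha⟩ := hsub
    have hxval : x = f₂ a + ∑ j, ((c j : Completion K)) • z j := by
      apply Subtype.ext
      have h1 : (f₂ a).1 = f a := rfl
      have h2 : ((∑ j, ((c j : Completion K)) • z j : ↥N) : B)
          = ∑ j, c j • (w j).1 := by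
        rw [Submodule.coe_sum]
        exact Finset.sum_congr rfl fun j _ => by rw [SetLike.val_smul, hcoe]
      rw [Submodule.coe_add, h1, h2]
      have ha'' : f a = ((xK - ∑ j, c j • w j : ↥NK) : B) := ha
      have ha' : f a = x.1 - ∑ j, c j • (w j).1 := by
        rw [ha'', AddSubgroupClass.coe_sub, Submodule.coe_sum]
        simp [hxK]
      rw [ha']
      abel
    rw [hxval]
    have hmk2 : Submodule.Quotient.mk (p := R) (f₂ a + ∑ j, ((c j : Completion K)) • z j)
        = ∑ j, ((c j : Completion K)) • Submodule.Quotient.mk (p := R) (z j) := by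
      rw [← R.mkQ_apply, map_add, map_sum]
      have h0 : R.mkQ (f₂ a) = 0 := by
        rw [Submodule.mkQ_apply, Submodule.Quotient.mk_eq_zero]
        exact ⟨a, rfl⟩
      rw [h0, zero_add]
      exact Finset.sum_congr rfl fun j _ => by rw [map_smul, Submodule.mkQ_apply]
    rw [hmk2]
    exact Submodule.sum_mem _ fun j _ =>
      Submodule.smul_mem _ _ (Submodule.subset_span ⟨j, rfl⟩)
  obtain ⟨F, hF⟩ := Submodule.exists_isCompl R
  haveI : FiniteDimensional (Completion K) ↥F :=
    (Submodule.quotientEquivOfIsCompl R F hF).finiteDimensional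
  haveI : CompleteSpace ↥F := (Submodule.complete_of_finiteDimensional F).completeSpace_coe
  let T : A × ↥F →L[Completion K] ↥N := f₂.coprod F.subtypeL
  have hTsurj : Function.Surjective T := by
    intro x
    have hx : x ∈ R ⊔ F := by rw [hF.sup_eq_top]; trivial
    obtain ⟨y, hy, s, hs, hysx⟩ := Submodule.mem_sup.1 hx
    obtain ⟨a, rfl⟩ := hy
    exact ⟨(a, ⟨s, hs⟩), hysx⟩
  have hT : IsOpenMap T := T.isOpenMap hTsurj
  have hO : IsOpen (⇑T '' (Set.univ ×ˢ ({(0 : ↥F)}ᶜ))) :=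
    hT _ (isOpen_univ.prod isClosed_singleton.isOpen_compl)
  have hcompl : Set.range ⇑f₂ = (⇑T '' (Set.univ ×ˢ ({(0 : ↥F)}ᶜ)))ᶜ := by
    ext x
    constructor
    · rintro ⟨a, rfl⟩ ⟨⟨a', s⟩, ⟨-, hs⟩, hTx⟩
      apply hs
      have hsr : (s : ↥N) ∈ R := by
        refine ⟨a - a', ?_⟩
        show f₂ (a - a') = (s : ↥N)
        have h3 : f₂ a' + (s : ↥N) = f₂ a := hTx
        rw [map_sub, ← h3]
        abel
      have h4 : (s : ↥N) = 0 := Submodule.disjoint_def.1 hF.disjoint _ hsr s.2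
      exact Subtype.ext h4
    · intro hx
      obtain ⟨⟨a, s⟩, hTx⟩ := hTsurj x
      by_cases hs : s = 0
      · refine ⟨a, ?_⟩
        rw [← hTx]
        show f₂ a = f₂ a + F.subtypeL s
        rw [hs, map_zero, add_zero]
      · exact absurd ⟨(a, s), ⟨Set.mem_univ _, hs⟩, hTx⟩ hx
  have hclosed₂ : IsClosed (Set.range ⇑f₂) := by
    rw [hcompl]; exact hO.isClosed_compl
  have hrange : Set.range ⇑f = Subtype.val '' Set.range ⇑f₂ := by
    ext b
    constructor
    · rintro ⟨a, rfl⟩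
      exact ⟨f₂ a, ⟨a, rfl⟩, rfl⟩
    · rintro ⟨y, ⟨a, rfl⟩, rfl⟩
      exact ⟨a, rfl⟩
  rw [hrange]
  exact hNclosed.isClosedMap_subtype_val _ hclosed₂

end Key



/-- If `V^•` is a (`ℤ`-indexed) complex of Banach spaces over a
nonarchimedean field `K` all of whose cohomology groups `H^i = ker d^i / im d^{i-1}`
are finite-dimensional over `K`, then every differential of the complex is strict. -/
theorem strict_complex_of_finiteDimensional_cohomology
    {K : Type*} [NontriviallyNormedField K] [IsUltrametricDist K]
    {V : ℤ → Type*} [∀ i, NormedAddCommGroup (V i)] [∀ i, NormedSpace K (V i)]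
    [∀ i, CompleteSpace (V i)] [∀ i, IsUltrametricDist (V i)]
    (d : ∀ i : ℤ, V i →L[K] V (i + 1))
    (hcomplex : ∀ (i : ℤ) (x : V i), d (i + 1) (d i x) = 0)
    (hfin : ∀ i : ℤ,
      FiniteDimensional K
        (↥(LinearMap.ker ((d (i + 1)) : V (i+1) →ₗ[K] V (i+1+1))) ⧸
          Submodule.comap
            (LinearMap.ker ((d (i + 1)) : V (i+1) →ₗ[K] V (i+1+1))).subtype
            (LinearMap.range ((d i) : V i →ₗ[K] V (i+1))))) :
    ∀ i : ℤ, IsStrict (d i) := by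
  intro i
  have hclosed : IsClosed (Set.range ⇑(d i)) :=
    isClosed_range_of_finiteDimensional_coker (d i) (d (i + 1)) (hcomplex i) (hfin i)
  intro U hU
  set M : Submodule K (V (i + 1)) := LinearMap.range ((d i) : V i →ₗ[K] V (i + 1)) with hM
  have hMc : IsClosed (M : Set (V (i + 1))) := by
    have h : (M : Set (V (i + 1))) = Set.range ⇑(d i) := by
      ext x
      exact ⟨fun ⟨a, ha⟩ => ⟨a, ha⟩, fun ⟨a, ha⟩ => ⟨a, ha⟩⟩
    rw [h]
    exact hclosed
  haveI : CompleteSpace ↥M := hMc.completeSpace_coe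
  let g : V i →L[K] ↥M := (d i).codRestrict M (fun x => LinearMap.mem_range_self _ x)
  have hgsurj : Function.Surjective g := by
    rintro ⟨y, hy⟩
    obtain ⟨a, rfl⟩ := hy
    exact ⟨a, rfl⟩
  have hopen : IsOpenMap g := g.isOpenMap hgsurj
  have hopenU : IsOpen (⇑g '' U) := hopen U hU
  rw [isOpen_induced_iff] at hopenU
  obtain ⟨O, hO, hOU⟩ := hopenU
  refine ⟨O, hO, ?_⟩
  ext x
  constructor
  · rintro ⟨hxO, a, rfl⟩
    have hmem : g a ∈ Subtype.val ⁻¹' O := hxO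
    rw [hOU] at hmem
    obtain ⟨u, hu, hgu⟩ := hmem
    exact ⟨u, hu, congrArg Subtype.val hgu⟩
  · rintro ⟨u, hu, rfl⟩
    have hmem : g u ∈ ⇑g '' U := ⟨u, hu, rfl⟩
    rw [← hOU] at hmem
    exact ⟨hmem, ⟨u, rfl⟩⟩
end

section
/- Every closed subspace of a separable Banach space over a nonarchimedean field is itself separable. -/
set_option linter.unusedSectionVars false

open Metric Set Submodule Filter

namespace CSSsep

/-! ### Bookkeeping constants -/

noncomputable def eps (n : ℕ) : ℝ := (1/2 : ℝ)^(n+2)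

lemma eps_pos (n : ℕ) : 0 < eps n := pow_pos (by norm_num) _

lemma eps_le_one (n : ℕ) : eps n ≤ 1 := by
  unfold eps
  exact pow_le_one₀ (by norm_num) (by norm_num)

noncomputable def PP (n : ℕ) : ℝ := ∏ k ∈ Finset.range n, (1 + eps k)

lemma PP_nonneg (n : ℕ) : 0 ≤ PP n :=
  Finset.prod_nonneg fun i _ => by nlinarith [eps_pos i]

lemma one_le_PP (n : ℕ) : 1 ≤ PP n := by
  unfold PP
  have := Finset.prod_le_prod (s := Finset.range n) (f := fun _ => (1:ℝ)) (g := fun k => 1 + eps k)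
    (fun i _ => by norm_num) (fun i _ => by nlinarith [eps_pos i])
  simpa using this

lemma sum_eps_nonneg (n : ℕ) : 0 ≤ ∑ k ∈ Finset.range n, eps k :=
  Finset.sum_nonneg fun i _ => (eps_pos i).le

lemma sum_eps_le (n : ℕ) : ∑ k ∈ Finset.range n, eps k ≤ 1/2 := by
  have h1 : ∀ k ∈ Finset.range n, eps k = (1/4) * (1/2:ℝ)^k := by
    intro k _
    unfold eps
    rw [pow_add]
    ring
  rw [Finset.sum_congr rfl h1, ← Finset.mul_sum]
  have := sum_geometric_two_le n
  nlinarith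

lemma PP_aux (n : ℕ) : PP n * (1 - ∑ k ∈ Finset.range n, eps k) ≤ 1 := by
  induction n with
  | zero => simp [PP]
  | succ n ih =>
    have h1 : PP (n+1) = PP n * (1 + eps n) := Finset.prod_range_succ _ n
    have h2 : ∑ k ∈ Finset.range (n+1), eps k = (∑ k ∈ Finset.range n, eps k) + eps n :=
      Finset.sum_range_succ _ n
    rw [h1, h2]
    have hP := PP_nonneg n
    have he := eps_pos n
    have hS := sum_eps_nonneg n
    nlinarith [mul_nonneg hP (mul_nonneg he.le hS), mul_nonneg hP (mul_nonneg he.le he.le)]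

lemma PP_le_two (n : ℕ) : PP n ≤ 2 := by
  have h1 := PP_aux n
  have h2 := sum_eps_le n
  have h3 := PP_nonneg n
  nlinarith

lemma PP_mono_succ (n : ℕ) : PP n ≤ PP (n+1) := by
  have h1 : PP (n+1) = PP n * (1 + eps n) := Finset.prod_range_succ _ n
  nlinarith [PP_nonneg n, eps_pos n]

lemma one_add_eps_le_PP_succ (n : ℕ) : 1 + eps n ≤ PP (n+1) := by
  have h1 : PP (n+1) = PP n * (1 + eps n) := Finset.prod_range_succ _ n
  nlinarith [one_le_PP n, eps_pos n]


/-! ### The distance-to-subspace seminorm `rho` -/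

section Rho

variable {K : Type*} [NontriviallyNormedField K] {V : Type*} [NormedAddCommGroup V]
  [NormedSpace K V]

noncomputable def rho (V₀ : Submodule K V) (v : V) : ℝ := Metric.infDist v (V₀ : Set V)

variable (V₀ : Submodule K V)

lemma V0_nonempty : (V₀ : Set V).Nonempty := ⟨0, V₀.zero_mem⟩

lemma rho_nonneg (v : V) : 0 ≤ rho V₀ v := Metric.infDist_nonneg

lemma rho_le_norm (v : V) : rho V₀ v ≤ ‖v‖ := by
  simpa [dist_zero_right, rho] using Metric.infDist_le_dist_of_mem (x := v) V₀.zero_mem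

lemma rho_zero_of_mem {w : V} (hw : w ∈ V₀) : rho V₀ w = 0 :=
  Metric.infDist_zero_of_mem hw

lemma le_rho {v : V} {b : ℝ} (h : ∀ y ∈ V₀, b ≤ dist v y) : b ≤ rho V₀ v := by
  by_contra hb
  push_neg at hb
  obtain ⟨y, hy, hd⟩ := (Metric.infDist_lt_iff (V0_nonempty V₀)).mp hb
  exact absurd hd (not_lt.2 (h y hy))

lemma rho_le_of_forall {v : V} {b : ℝ} (h : ∀ ε : ℝ, 0 < ε → rho V₀ v ≤ b + ε) :
    rho V₀ v ≤ b := by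
  by_contra hb
  push_neg at hb
  have := h ((rho V₀ v - b)/2) (by linarith)
  linarith

lemma rho_add_mem (v : V) {w : V} (hw : w ∈ V₀) : rho V₀ (v + w) = rho V₀ v := by
  have key : ∀ (u : V) {z : V}, z ∈ V₀ → rho V₀ (u + z) ≤ rho V₀ u := by
    intro u z hz
    apply le_rho
    intro y hy
    have h1 : rho V₀ (u + z) ≤ dist (u + z) (y + z) :=
      Metric.infDist_le_dist_of_mem (V₀.add_mem hy hz)
    rwa [dist_add_right] at h1
  refine le_antisymm (key v hw) ?_
  have := key (v + w) (V₀.neg_mem hw)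
  simpa using this

lemma rho_smul (c : K) (v : V) : rho V₀ (c • v) = ‖c‖ * rho V₀ v := by
  have hle : ∀ (a : K) (u : V), rho V₀ (a • u) ≤ ‖a‖ * rho V₀ u := by
    intro a u
    by_cases ha : a = 0
    · simp [ha, rho_zero_of_mem V₀ V₀.zero_mem]
    · have hna : 0 < ‖a‖ := norm_pos_iff.mpr ha
      apply rho_le_of_forall
      intro ε hε
      obtain ⟨y, hy, hd⟩ := (Metric.infDist_lt_iff (V0_nonempty V₀)).mp
        (show Metric.infDist u (V₀ : Set V) < rho V₀ u + ε / ‖a‖ by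
          have : 0 < ε / ‖a‖ := by positivity
          unfold rho
          linarith)
      have h1 : rho V₀ (a • u) ≤ dist (a • u) (a • y) :=
        Metric.infDist_le_dist_of_mem (V₀.smul_mem a hy)
      rw [dist_smul₀] at h1
      calc rho V₀ (a • u) ≤ ‖a‖ * dist u y := h1
        _ ≤ ‖a‖ * (rho V₀ u + ε / ‖a‖) := by nlinarith
        _ = ‖a‖ * rho V₀ u + ε := by field_simp
  by_cases hc : c = 0
  · simp [hc, rho_zero_of_mem V₀ V₀.zero_mem]
  · refine le_antisymm (hle c v) ?_
    have h2 := hle c⁻¹ (c • v)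
    rw [inv_smul_smul₀ hc, norm_inv] at h2
    have hnc : 0 < ‖c‖ := norm_pos_iff.mpr hc
    calc ‖c‖ * rho V₀ v ≤ ‖c‖ * (‖c‖⁻¹ * rho V₀ (c • v)) := by nlinarith
      _ = rho V₀ (c • v) := by field_simp

lemma rho_neg (v : V) : rho V₀ (-v) = rho V₀ v := by
  have := rho_smul V₀ (-1 : K) v
  simpa using this

variable [IsUltrametricDist V]

lemma rho_add_le_max (u v : V) :
    rho V₀ (u + v) ≤ max (rho V₀ u) (rho V₀ v) := by
  apply rho_le_of_forall
  intro ε hε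
  obtain ⟨y, hy, hdy⟩ := (Metric.infDist_lt_iff (V0_nonempty V₀)).mp
    (show Metric.infDist u (V₀ : Set V) < rho V₀ u + ε by unfold rho; linarith)
  obtain ⟨z, hz, hdz⟩ := (Metric.infDist_lt_iff (V0_nonempty V₀)).mp
    (show Metric.infDist v (V₀ : Set V) < rho V₀ v + ε by unfold rho; linarith)
  have h1 : rho V₀ (u + v) ≤ dist (u + v) (y + z) :=
    Metric.infDist_le_dist_of_mem (V₀.add_mem hy hz)
  have h2 : dist (u + v) (y + z) = ‖(u - y) + (v - z)‖ := by
    rw [dist_eq_norm]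
    congr 1
    abel
  have h3 : ‖(u - y) + (v - z)‖ ≤ max ‖u - y‖ ‖v - z‖ :=
    IsUltrametricDist.norm_add_le_max _ _
  rw [h2] at h1
  have h4 : ‖u - y‖ < rho V₀ u + ε := by rwa [← dist_eq_norm]
  have h5 : ‖v - z‖ < rho V₀ v + ε := by rwa [← dist_eq_norm]
  have h6 : max ‖u - y‖ ‖v - z‖ ≤ max (rho V₀ u) (rho V₀ v) + ε :=
    max_le (h4.le.trans (by simp [le_max_left, add_le_add_iff_right]))
      (h5.le.trans (by simp [le_max_right, add_le_add_iff_right]))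
  linarith

lemma rho_add_le (u v : V) : rho V₀ (u + v) ≤ rho V₀ u + rho V₀ v :=
  (rho_add_le_max V₀ u v).trans
    (max_le (le_add_of_nonneg_right (rho_nonneg V₀ v)) (le_add_of_nonneg_left (rho_nonneg V₀ u)))

lemma rho_sub_le (u v : V) : rho V₀ (u - v) ≤ rho V₀ u + rho V₀ v := by
  rw [sub_eq_add_neg]
  exact (rho_add_le V₀ u (-v)).trans (by rw [rho_neg])

lemma rho_sum_le {ι : Type*} (s : Finset ι) (f : ι → V) :
    rho V₀ (∑ i ∈ s, f i) ≤ ∑ i ∈ s, rho V₀ (f i) := by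
  classical
  induction s using Finset.cons_induction with
  | empty => simp [rho_zero_of_mem V₀ V₀.zero_mem]
  | cons a s ha ih =>
    rw [Finset.sum_cons, Finset.sum_cons]
    exact (rho_add_le V₀ _ _).trans (by linarith)

end Rho


/-! ### The orthogonalization construction -/

section Construction

variable {K : Type*} [NontriviallyNormedField K] {V : Type*} [NormedAddCommGroup V]
  [NormedSpace K V]

variable (V₀ : Submodule K V) (x : ℕ → V)

lemma step_ex (n : ℕ) (F : Submodule K V)
    (h : Metric.infDist (x n) ((F ⊔ V₀ : Submodule K V) : Set V) ≠ 0) :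
    ∃ g, g ∈ ((F ⊔ V₀ : Submodule K V) : Set V) ∧
      dist (x n) g < (1 + eps n) * Metric.infDist (x n) ((F ⊔ V₀ : Submodule K V) : Set V) := by
  have hne : ((F ⊔ V₀ : Submodule K V) : Set V).Nonempty := ⟨0, Submodule.zero_mem _⟩
  have h0 : 0 < Metric.infDist (x n) ((F ⊔ V₀ : Submodule K V) : Set V) :=
    lt_of_le_of_ne Metric.infDist_nonneg (Ne.symm h)
  have hlt : Metric.infDist (x n) ((F ⊔ V₀ : Submodule K V) : Set V) <
      (1 + eps n) * Metric.infDist (x n) ((F ⊔ V₀ : Submodule K V) : Set V) := by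
    nlinarith [eps_pos n]
  obtain ⟨g, hg, hd⟩ := (Metric.infDist_lt_iff hne).mp hlt
  exact ⟨g, hg, hd⟩

noncomputable def step (n : ℕ) (F : Submodule K V) : V :=
  if h : Metric.infDist (x n) ((F ⊔ V₀ : Submodule K V) : Set V) = 0 then 0
  else x n - (step_ex V₀ x n F h).choose

noncomputable def BB : ℕ → ℕ → V
  | 0 => fun _ => 0
  | (n+1) => fun k =>
      if k = n then step V₀ x n (Submodule.span K (BB n '' Set.Iio n)) else BB n k

noncomputable def bb (n : ℕ) : V := BB V₀ x (n+1) n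

noncomputable def Fn (n : ℕ) : Submodule K V := Submodule.span K (bb V₀ x '' Set.Iio n)

lemma BB_eq_bb : ∀ n k, k < n → BB V₀ x n k = bb V₀ x k := by
  intro n
  induction n with
  | zero => intro k hk; omega
  | succ n ih =>
    intro k hk
    by_cases hkn : k = n
    · subst hkn
      rfl
    · have hk' : k < n := by omega
      have h1 : BB V₀ x (n+1) k = BB V₀ x n k := by
        show (if k = n then _ else BB V₀ x n k) = BB V₀ x n k
        rw [if_neg hkn]
      rw [h1, ih k hk']

lemma bb_def (n : ℕ) : bb V₀ x n = step V₀ x n (Fn V₀ x n) := by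
  have himg : BB V₀ x n '' Set.Iio n = bb V₀ x '' Set.Iio n :=
    Set.image_congr fun k hk => BB_eq_bb V₀ x n k hk
  show BB V₀ x (n+1) n = _
  show (if n = n then step V₀ x n (Submodule.span K (BB V₀ x n '' Set.Iio n))
      else BB V₀ x n n) = _
  rw [if_pos rfl, himg]
  rfl

lemma Fn_mono {m m' : ℕ} (h : m ≤ m') : Fn V₀ x m ≤ Fn V₀ x m' :=
  Submodule.span_mono (Set.image_mono (Set.Iio_subset_Iio h))

lemma bb_mem_Fn_succ (n : ℕ) : bb V₀ x n ∈ Fn V₀ x (n+1) :=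
  Submodule.subset_span ⟨n, by simp, rfl⟩

lemma bb_cases (n : ℕ) :
    (Metric.infDist (x n) ((Fn V₀ x n ⊔ V₀ : Submodule K V) : Set V) = 0 ∧ bb V₀ x n = 0) ∨
    (∃ q ∈ Fn V₀ x n, ∃ w ∈ V₀, x n - bb V₀ x n = q + w ∧
      ‖bb V₀ x n‖ < (1 + eps n) *
        Metric.infDist (x n) ((Fn V₀ x n ⊔ V₀ : Submodule K V) : Set V)) := by
  rw [bb_def]
  unfold step
  split
  · next h => exact Or.inl ⟨h, rfl⟩
  · next h =>
    right
    obtain ⟨hg, hd⟩ := (step_ex V₀ x n (Fn V₀ x n) h).choose_spec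
    obtain ⟨q, hq, w, hw, hqw⟩ := Submodule.mem_sup.mp hg
    refine ⟨q, hq, w, hw, ?_, ?_⟩
    · rw [sub_sub_cancel, ← hqw]
    · rw [← dist_eq_norm]
      exact hd


lemma infDist_le_rho_sub (n : ℕ) {q : V} (hq : q ∈ Fn V₀ x n) :
    Metric.infDist (x n) ((Fn V₀ x n ⊔ V₀ : Submodule K V) : Set V) ≤ rho V₀ (x n - q) := by
  apply le_rho
  intro y hy
  have hmem : q + y ∈ (Fn V₀ x n ⊔ V₀ : Submodule K V) :=
    Submodule.add_mem _ (Submodule.mem_sup_left hq) (Submodule.mem_sup_right hy)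
  have h1 : Metric.infDist (x n) ((Fn V₀ x n ⊔ V₀ : Submodule K V) : Set V)
      ≤ dist (x n) (q + y) := Metric.infDist_le_dist_of_mem hmem
  have h2 : dist (x n) (q + y) = dist (x n - q) y := by
    rw [dist_eq_norm, dist_eq_norm]
    congr 1
    abel
  rwa [h2] at h1

lemma bb_norm (n : ℕ) : ‖bb V₀ x n‖ ≤ (1 + eps n) * rho V₀ (bb V₀ x n) := by
  rcases bb_cases V₀ x n with ⟨_, hz⟩ | ⟨q, hq, w, hw, hqw, hnorm⟩
  · rw [hz]
    simp only [norm_zero]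
    have := rho_nonneg V₀ (0 : V)
    nlinarith [eps_pos n]
  · have hbb : bb V₀ x n = (x n - q) + (-w) := by
      have : x n = q + w + bb V₀ x n := by
        rw [← hqw]; abel
      rw [this]; abel
    have hrho : rho V₀ (bb V₀ x n) = rho V₀ (x n - q) := by
      rw [hbb, rho_add_mem V₀ _ (V₀.neg_mem hw)]
    have hlow := infDist_le_rho_sub V₀ x n hq
    rw [hrho]
    calc ‖bb V₀ x n‖ ≤ (1 + eps n) * Metric.infDist (x n)
          ((Fn V₀ x n ⊔ V₀ : Submodule K V) : Set V) := hnorm.le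
      _ ≤ (1 + eps n) * rho V₀ (x n - q) := by nlinarith [eps_pos n]

lemma bb_approx (n : ℕ) {η : ℝ} (hη : 0 < η) :
    ∃ q, q ∈ Fn V₀ x (n+1) ∧ rho V₀ (x n - q) < η := by
  rcases bb_cases V₀ x n with ⟨h0, _⟩ | ⟨q, hq, w, hw, hqw, _⟩
  · have hne : ((Fn V₀ x n ⊔ V₀ : Submodule K V) : Set V).Nonempty := ⟨0, Submodule.zero_mem _⟩
    obtain ⟨g, hg, hd⟩ := (Metric.infDist_lt_iff hne).mp (by rw [h0]; exact hη)
    obtain ⟨q, hq, w, hw, hqw⟩ := Submodule.mem_sup.mp hg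
    refine ⟨q, Fn_mono V₀ x (Nat.le_succ n) hq, ?_⟩
    have h1 : rho V₀ (x n - q) ≤ ‖x n - q - w‖ := by
      have := Metric.infDist_le_dist_of_mem (x := x n - q) hw
      rwa [dist_eq_norm] at this
    have h2 : ‖x n - q - w‖ = dist (x n) g := by
      rw [dist_eq_norm, ← hqw]
      congr 1
      abel
    rw [h2] at h1
    exact lt_of_le_of_lt h1 hd
  · refine ⟨q + bb V₀ x n, Submodule.add_mem _ (Fn_mono V₀ x (Nat.le_succ n) hq)
      (bb_mem_Fn_succ V₀ x n), ?_⟩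
    have h1 : x n - (q + bb V₀ x n) = w := by
      have : x n = q + w + bb V₀ x n := by rw [← hqw]; abel
      rw [this]; abel
    rw [h1, rho_zero_of_mem V₀ hw]
    exact hη

variable [IsUltrametricDist V]

lemma bb_orth (n : ℕ) {q : V} (hq : q ∈ Fn V₀ x n) :
    max (rho V₀ (bb V₀ x n)) (rho V₀ q) ≤ (1 + eps n) * rho V₀ (bb V₀ x n - q) := by
  have hq_eq : rho V₀ q ≤ max (rho V₀ (bb V₀ x n)) (rho V₀ (bb V₀ x n - q)) := by
    have h := rho_add_le_max V₀ (bb V₀ x n) (-(bb V₀ x n - q))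
    rw [rho_neg] at h
    have heq : bb V₀ x n + -(bb V₀ x n - q) = q := by abel
    rwa [heq] at h
  rcases bb_cases V₀ x n with ⟨_, hz⟩ | ⟨q₀, hq₀, w, hw, hqw, hnorm⟩
  · rw [hz]
    simp only [rho_zero_of_mem V₀ V₀.zero_mem, zero_sub, rho_neg]
    rw [max_eq_right (rho_nonneg V₀ q)]
    nlinarith [eps_pos n, rho_nonneg V₀ q]
  · -- main case
    have hsub : bb V₀ x n - q = (x n - (q₀ + q)) + (-w) := by
      have : x n = q₀ + w + bb V₀ x n := by rw [← hqw]; abel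
      rw [this]; abel
    have hrho_sub : rho V₀ (bb V₀ x n - q) = rho V₀ (x n - (q₀ + q)) := by
      rw [hsub, rho_add_mem V₀ _ (V₀.neg_mem hw)]
    have hlow : Metric.infDist (x n) ((Fn V₀ x n ⊔ V₀ : Submodule K V) : Set V)
        ≤ rho V₀ (bb V₀ x n - q) := by
      rw [hrho_sub]
      exact infDist_le_rho_sub V₀ x n (Submodule.add_mem _ hq₀ hq)
    have hbn : rho V₀ (bb V₀ x n) ≤ (1 + eps n) * rho V₀ (bb V₀ x n - q) := by
      have h1 : rho V₀ (bb V₀ x n) ≤ ‖bb V₀ x n‖ := rho_le_norm V₀ _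
      nlinarith [eps_pos n]
    apply max_le hbn
    have h2 : max (rho V₀ (bb V₀ x n)) (rho V₀ (bb V₀ x n - q))
        ≤ (1 + eps n) * rho V₀ (bb V₀ x n - q) := by
      apply max_le hbn
      nlinarith [eps_pos n, rho_nonneg V₀ (bb V₀ x n - q)]
    exact hq_eq.trans h2


lemma orth (n : ℕ) (c : ℕ → K) :
    ∀ j < n, rho V₀ (c j • bb V₀ x j) ≤ PP n * rho V₀ (∑ k ∈ Finset.range n, c k • bb V₀ x k) := by
  induction n with
  | zero => intro j hj; omega
  | succ n ih =>
    intro j hj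
    have hsum : ∑ k ∈ Finset.range (n+1), c k • bb V₀ x k
        = (∑ k ∈ Finset.range n, c k • bb V₀ x k) + c n • bb V₀ x n :=
      Finset.sum_range_succ _ n
    by_cases hc : c n = 0
    · have hS : ∑ k ∈ Finset.range (n+1), c k • bb V₀ x k
          = ∑ k ∈ Finset.range n, c k • bb V₀ x k := by
        rw [hsum, hc, zero_smul, add_zero]
      rcases Nat.lt_succ_iff_lt_or_eq.mp hj with hj' | rfl
      · calc rho V₀ (c j • bb V₀ x j)
            ≤ PP n * rho V₀ (∑ k ∈ Finset.range n, c k • bb V₀ x k) := ih j hj'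
          _ ≤ PP (n+1) * rho V₀ (∑ k ∈ Finset.range n, c k • bb V₀ x k) :=
              mul_le_mul_of_nonneg_right (PP_mono_succ n) (rho_nonneg V₀ _)
          _ = _ := by rw [hS]
      · rw [hc, zero_smul, rho_zero_of_mem V₀ V₀.zero_mem]
        exact mul_nonneg (PP_nonneg _) (rho_nonneg V₀ _)
    · -- c n ≠ 0
      set S' := ∑ k ∈ Finset.range n, c k • bb V₀ x k with hS'
      have hS'mem : S' ∈ Fn V₀ x n := by
        apply Submodule.sum_mem
        intro k hk
        exact Submodule.smul_mem _ _
          (Submodule.subset_span ⟨k, Finset.mem_range.mp hk, rfl⟩)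
      set q := -((c n)⁻¹ • S') with hqdef
      have hqmem : q ∈ Fn V₀ x n := Submodule.neg_mem _ (Submodule.smul_mem _ _ hS'mem)
      have key : c n • (bb V₀ x n - q) = ∑ k ∈ Finset.range (n+1), c k • bb V₀ x k := by
        rw [hsum, hqdef]
        rw [smul_sub, smul_neg, smul_smul, mul_inv_cancel₀ hc, one_smul]
        abel
      have key2 : c n • q = -S' := by
        rw [hqdef, smul_neg, smul_smul, mul_inv_cancel₀ hc, one_smul]
      have horth := bb_orth V₀ x n hqmem
      have hrhoS : rho V₀ (∑ k ∈ Finset.range (n+1), c k • bb V₀ x k)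
          = ‖c n‖ * rho V₀ (bb V₀ x n - q) := by
        rw [← key, rho_smul]
      rcases Nat.lt_succ_iff_lt_or_eq.mp hj with hj' | hjn
      · -- j < n
        have h1 : rho V₀ S' = ‖c n‖ * rho V₀ q := by
          have : rho V₀ S' = rho V₀ (c n • q) := by rw [key2, rho_neg]
          rw [this, rho_smul]
        have h2 : rho V₀ q ≤ (1 + eps n) * rho V₀ (bb V₀ x n - q) :=
          (le_max_right _ _).trans horth
        have h3 : rho V₀ S' ≤ (1 + eps n) * rho V₀ (∑ k ∈ Finset.range (n+1), c k • bb V₀ x k) := by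
          rw [h1, hrhoS]
          nlinarith [norm_nonneg (c n), rho_nonneg V₀ (bb V₀ x n - q), eps_pos n]
        calc rho V₀ (c j • bb V₀ x j) ≤ PP n * rho V₀ S' := ih j hj'
          _ ≤ PP n * ((1 + eps n) * rho V₀ (∑ k ∈ Finset.range (n+1), c k • bb V₀ x k)) :=
              mul_le_mul_of_nonneg_left h3 (PP_nonneg n)
          _ = PP (n+1) * rho V₀ (∑ k ∈ Finset.range (n+1), c k • bb V₀ x k) := by
              rw [show PP (n+1) = PP n * (1 + eps n) from Finset.prod_range_succ _ n]
              ring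
      · -- j = n
        rw [hjn]
        have h2 : rho V₀ (bb V₀ x n) ≤ (1 + eps n) * rho V₀ (bb V₀ x n - q) :=
          (le_max_left _ _).trans horth
        have h4 : rho V₀ (c n • bb V₀ x n) = ‖c n‖ * rho V₀ (bb V₀ x n) := rho_smul V₀ _ _
        have h5 : (1 + eps n) ≤ PP (n+1) := one_add_eps_le_PP_succ n
        rw [h4, hrhoS]
        have hcn : (0:ℝ) ≤ ‖c n‖ := norm_nonneg _
        have hrs : (0:ℝ) ≤ rho V₀ (bb V₀ x n - q) := rho_nonneg V₀ _
        nlinarith [mul_le_mul_of_nonneg_left h2 hcn,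
          mul_le_mul_of_nonneg_right (mul_le_mul_of_nonneg_left hrs hcn) (sub_nonneg.mpr h5)]

lemma norm_le_rho (m : ℕ) {v : V} (hv : v ∈ Fn V₀ x m) : ‖v‖ ≤ 4 * rho V₀ v := by
  classical
  have himg : bb V₀ x '' Set.Iio m = Set.range (fun i : Fin m => bb V₀ x i) := by
    ext w
    simp only [Set.mem_image, Set.mem_Iio, Set.mem_range]
    exact ⟨fun ⟨k, hk, e⟩ => ⟨⟨k, hk⟩, e⟩, fun ⟨i, e⟩ => ⟨i.1, i.2, e⟩⟩
  rw [Fn, himg] at hv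
  obtain ⟨cf, hcf⟩ := (mem_span_range_iff_exists_fun K).mp hv
  set c : ℕ → K := fun k => if h : k < m then cf ⟨k, h⟩ else 0 with hcdef
  have hsum : ∑ k ∈ Finset.range m, c k • bb V₀ x k = v := by
    rw [← hcf, ← Fin.sum_univ_eq_sum_range (fun k => c k • bb V₀ x k) m]
    apply Finset.sum_congr rfl
    intro i _
    simp only [hcdef, i.2, dif_pos, Fin.eta]
  conv_lhs => rw [← hsum]
  apply IsUltrametricDist.norm_sum_le_of_forall_le_of_nonneg
    (mul_nonneg (by norm_num) (rho_nonneg V₀ _))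
  intro k hk
  have hk' : k < m := Finset.mem_range.mp hk
  have h1 : ‖c k • bb V₀ x k‖ = ‖c k‖ * ‖bb V₀ x k‖ := norm_smul _ _
  have h2 : ‖bb V₀ x k‖ ≤ (1 + eps k) * rho V₀ (bb V₀ x k) := bb_norm V₀ x k
  have h3 : rho V₀ (c k • bb V₀ x k) = ‖c k‖ * rho V₀ (bb V₀ x k) := rho_smul V₀ _ _
  have h4 := orth V₀ x m c k hk'
  rw [hsum] at h4
  have h5 : (1 + eps k) ≤ 2 := by nlinarith [eps_le_one k]
  have h6 : PP m ≤ 2 := PP_le_two m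
  have hcn : (0:ℝ) ≤ ‖c k‖ := norm_nonneg _
  have hrb : (0:ℝ) ≤ rho V₀ (bb V₀ x k) := rho_nonneg V₀ _
  have hrv : (0:ℝ) ≤ rho V₀ v := rho_nonneg V₀ _
  calc ‖c k • bb V₀ x k‖ = ‖c k‖ * ‖bb V₀ x k‖ := h1
    _ ≤ ‖c k‖ * ((1 + eps k) * rho V₀ (bb V₀ x k)) := mul_le_mul_of_nonneg_left h2 hcn
    _ = (1 + eps k) * rho V₀ (c k • bb V₀ x k) := by rw [h3]; ring
    _ ≤ 2 * rho V₀ (c k • bb V₀ x k) := by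
        nlinarith [rho_nonneg V₀ (c k • bb V₀ x k)]
    _ ≤ 2 * (PP m * rho V₀ v) := by nlinarith [rho_nonneg V₀ (c k • bb V₀ x k)]
    _ ≤ 4 * rho V₀ v := by nlinarith


/-! ### Approximating sequences and their limits -/

lemma qq_ex (n m : ℕ) :
    ∃ q, q ∈ Fn V₀ x (n+1) ∧ rho V₀ (x n - q) < 1 / ((m : ℝ) + 1) :=
  bb_approx V₀ x n (by positivity)

noncomputable def qq (n m : ℕ) : V := (qq_ex V₀ x n m).choose

lemma qq_mem (n m : ℕ) : qq V₀ x n m ∈ Fn V₀ x (n+1) :=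
  (qq_ex V₀ x n m).choose_spec.1

lemma qq_rho (n m : ℕ) : rho V₀ (x n - qq V₀ x n m) < 1 / ((m : ℝ) + 1) :=
  (qq_ex V₀ x n m).choose_spec.2

lemma qq_cauchy (n : ℕ) : CauchySeq (qq V₀ x n) := by
  rw [Metric.cauchySeq_iff]
  intro ε hε
  obtain ⟨N, hN⟩ := exists_nat_gt (8 / ε)
  refine ⟨N, fun m hm m' hm' => ?_⟩
  have hmem : qq V₀ x n m - qq V₀ x n m' ∈ Fn V₀ x (n+1) :=
    Submodule.sub_mem _ (qq_mem V₀ x n m) (qq_mem V₀ x n m')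
  have h1 : rho V₀ (x n - qq V₀ x n m) < 1 / ((m : ℝ) + 1) := qq_rho V₀ x n m
  have h2 : rho V₀ (x n - qq V₀ x n m') < 1 / ((m' : ℝ) + 1) := qq_rho V₀ x n m'
  have heq : qq V₀ x n m - qq V₀ x n m' = (x n - qq V₀ x n m') - (x n - qq V₀ x n m) := by
    abel
  have h3 : rho V₀ (qq V₀ x n m - qq V₀ x n m')
      ≤ rho V₀ (x n - qq V₀ x n m') + rho V₀ (x n - qq V₀ x n m) := by
    rw [heq]
    exact rho_sub_le V₀ _ _
  have h4 : dist (qq V₀ x n m) (qq V₀ x n m') ≤ 4 * rho V₀ (qq V₀ x n m - qq V₀ x n m') := by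
    rw [dist_eq_norm]
    exact norm_le_rho V₀ x (n+1) hmem
  have hNm : 1 / ((m : ℝ) + 1) ≤ 1 / ((N : ℝ) + 1) := by
    apply one_div_le_one_div_of_le (by positivity)
    have : (N : ℝ) ≤ (m : ℝ) := Nat.cast_le.mpr hm
    linarith
  have hNm' : 1 / ((m' : ℝ) + 1) ≤ 1 / ((N : ℝ) + 1) := by
    apply one_div_le_one_div_of_le (by positivity)
    have : (N : ℝ) ≤ (m' : ℝ) := Nat.cast_le.mpr hm'
    linarith
  have hNb : 8 / ((N : ℝ) + 1) < ε := by
    rw [div_lt_iff₀ (by positivity)]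
    have h8 : 8 < (N : ℝ) * ε := (div_lt_iff₀ hε).mp hN
    nlinarith
  have hrr := rho_nonneg V₀ (qq V₀ x n m - qq V₀ x n m')
  calc dist (qq V₀ x n m) (qq V₀ x n m')
      ≤ 4 * rho V₀ (qq V₀ x n m - qq V₀ x n m') := h4
    _ ≤ 4 * (rho V₀ (x n - qq V₀ x n m') + rho V₀ (x n - qq V₀ x n m)) := by linarith
    _ < ε := by
        have h8 : 8 / ((N:ℝ)+1) = 8 * (1/((N:ℝ)+1)) := by ring
        rw [h8] at hNb
        linarith

variable [CompleteSpace V]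

noncomputable def yy (n : ℕ) : V :=
  (cauchySeq_tendsto_of_complete (qq_cauchy V₀ x n)).choose

lemma yy_tendsto (n : ℕ) : Tendsto (qq V₀ x n) atTop (nhds (yy V₀ x n)) :=
  (cauchySeq_tendsto_of_complete (qq_cauchy V₀ x n)).choose_spec

noncomputable def TT (n : ℕ) : V := x n - yy V₀ x n

lemma TT_mem (hclosed : IsClosed (V₀ : Set V)) (n : ℕ) : TT V₀ x n ∈ V₀ := by
  have key : ∀ m : ℕ, rho V₀ (TT V₀ x n)
      ≤ 1 / ((m : ℝ) + 1) + dist (TT V₀ x n) (x n - qq V₀ x n m) := by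
    intro m
    have h1 : rho V₀ (TT V₀ x n)
        ≤ rho V₀ (x n - qq V₀ x n m) + dist (TT V₀ x n) (x n - qq V₀ x n m) :=
      Metric.infDist_le_infDist_add_dist
    have h2 := (qq_rho V₀ x n m).le
    linarith
  have hdist : Tendsto (fun m => dist (TT V₀ x n) (x n - qq V₀ x n m)) atTop (nhds 0) := by
    have h3 : Tendsto (fun m => x n - qq V₀ x n m) atTop (nhds (x n - yy V₀ x n)) :=
      (tendsto_const_nhds).sub (yy_tendsto V₀ x n)
    have h4 := tendsto_iff_dist_tendsto_zero.mp h3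
    have h5 : ∀ m, dist (TT V₀ x n) (x n - qq V₀ x n m)
        = dist (x n - qq V₀ x n m) (x n - yy V₀ x n) := by
      intro m
      rw [dist_comm]
      rfl
    simpa only [h5] using h4
  have hlim : Tendsto (fun m : ℕ => 1 / ((m : ℝ) + 1) + dist (TT V₀ x n) (x n - qq V₀ x n m))
      atTop (nhds 0) := by
    have := tendsto_one_div_add_atTop_nhds_zero_nat.add hdist
    simpa using this
  have hle : rho V₀ (TT V₀ x n) ≤ 0 := ge_of_tendsto' hlim key
  have heq : rho V₀ (TT V₀ x n) = 0 := le_antisymm hle (rho_nonneg V₀ _)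
  have := (IsClosed.mem_iff_infDist_zero hclosed (V0_nonempty V₀)).mpr heq
  exact this

end Construction


end CSSsep

/-- A Banach space over a nonarchimedean field is *separable* if it contains a dense
`K`-subspace of at most countable dimension, i.e. the span of a countable set is
dense. -/
def CountablyGenerated (K V : Type*) [NontriviallyNormedField K]
    [NormedAddCommGroup V] [NormedSpace K V] : Prop :=
  ∃ s : Set V, s.Countable ∧ Dense (Submodule.span K s : Set V)

open CSSsep Filter

/-- Every closed subspace of a separable Banach space over a
nonarchimedean field is itself separable. -/
theorem closed_subspace_separable
    {K : Type*} [NontriviallyNormedField K] [IsUltrametricDist K]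
    {V : Type*} [NormedAddCommGroup V] [NormedSpace K V] [CompleteSpace V]
    [IsUltrametricDist V]
    (hsep : CountablyGenerated K V)
    (V₀ : Submodule K V) (hclosed : IsClosed (V₀ : Set V)) :
    CountablyGenerated K ↥V₀ := by
  classical
  obtain ⟨s, hsc, hsd⟩ := hsep
  obtain ⟨x, hx⟩ := (hsc.insert 0).exists_eq_range ⟨0, Set.mem_insert 0 s⟩
  have hdense : Dense ((Submodule.span K (Set.range x) : Submodule K V) : Set V) := by
    rw [← hx, Submodule.span_insert_zero]
    exact hsd
  set T : ℕ → ↥V₀ := fun n => ⟨TT V₀ x n, TT_mem V₀ x hclosed n⟩ with hTdef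
  refine ⟨Set.range T, Set.countable_range T, ?_⟩
  rw [Metric.dense_iff]
  intro w r hr
  have hr16 : 0 < r / 16 := by linarith
  obtain ⟨d, hd_mem, hd_dist⟩ := hdense.exists_dist_lt (↑w : V) hr16
  obtain ⟨cs, hcs⟩ := Finsupp.mem_span_range_iff_exists_finsupp.mp hd_mem
  rw [Finsupp.sum] at hcs
  set I := cs.support with hIdef
  set u : V := ∑ i ∈ I, cs i • TT V₀ x i with hudef
  set usub : ↥V₀ := ∑ i ∈ I, cs i • T i with husubdef
  have hcoe : (↑usub : V) = u := by
    rw [husubdef, hudef]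
    push_cast
    rfl
  have husub : usub ∈ Submodule.span K (Set.range T) :=
    Submodule.sum_mem _ fun i _ =>
      Submodule.smul_mem _ _ (Submodule.subset_span ⟨i, rfl⟩)
  set vm : ℕ → V := fun m => ∑ i ∈ I, cs i • qq V₀ x i m with hvmdef
  have hdu : d - u = ∑ i ∈ I, cs i • yy V₀ x i := by
    rw [← hcs, hudef, ← Finset.sum_sub_distrib]
    apply Finset.sum_congr rfl
    intro i _
    rw [← smul_sub]
    congr 1
    show x i - TT V₀ x i = yy V₀ x i
    rw [TT]
    abel
  have hv_tend : Tendsto vm atTop (nhds (d - u)) := by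
    rw [hdu]
    exact tendsto_finset_sum I fun i _ => (yy_tendsto V₀ x i).const_smul (cs i)
  set N := I.sup id + 1 with hNdef
  have hvm_mem : ∀ m, vm m ∈ Fn V₀ x N := by
    intro m
    apply Submodule.sum_mem
    intro i hi
    apply Submodule.smul_mem
    exact Fn_mono V₀ x (Nat.succ_le_succ (Finset.le_sup (f := id) hi)) (qq_mem V₀ x i m)
  set A := ∑ i ∈ I, ‖cs i‖ with hAdef
  have hA : 0 ≤ A := Finset.sum_nonneg fun i _ => norm_nonneg _
  have hrho_vm : ∀ m, rho V₀ (vm m) ≤ rho V₀ d + A * (1 / ((m : ℝ) + 1)) := by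
    intro m
    have h1 : rho V₀ (vm m) ≤ rho V₀ d + rho V₀ (vm m - d) := by
      have h2 := rho_add_le V₀ d (vm m - d)
      have h3 : d + (vm m - d) = vm m := by abel
      rwa [h3] at h2
    have h3 : vm m - d = ∑ i ∈ I, cs i • (qq V₀ x i m - x i) := by
      rw [← hcs, hvmdef, ← Finset.sum_sub_distrib]
      apply Finset.sum_congr rfl
      intro i _
      rw [smul_sub]
    have h4 : rho V₀ (vm m - d) ≤ ∑ i ∈ I, rho V₀ (cs i • (qq V₀ x i m - x i)) := by
      rw [h3]
      exact rho_sum_le V₀ I _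
    have h5 : ∑ i ∈ I, rho V₀ (cs i • (qq V₀ x i m - x i)) ≤ A * (1 / ((m : ℝ) + 1)) := by
      rw [hAdef, Finset.sum_mul]
      apply Finset.sum_le_sum
      intro i _
      rw [rho_smul]
      have h6 : rho V₀ (qq V₀ x i m - x i) = rho V₀ (x i - qq V₀ x i m) := by
        rw [show qq V₀ x i m - x i = -(x i - qq V₀ x i m) by abel, rho_neg]
      rw [h6]
      exact mul_le_mul_of_nonneg_left (qq_rho V₀ x i m).le (norm_nonneg _)
    linarith
  have ht1 : Tendsto (fun m : ℕ => A * (1 / ((m : ℝ) + 1))) atTop (nhds 0) := by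
    simpa using tendsto_one_div_add_atTop_nhds_zero_nat.const_mul A
  have ht1' : ∀ᶠ m : ℕ in atTop, A * (1 / ((m : ℝ) + 1)) < r / 16 :=
    Filter.Tendsto.eventually_lt_const hr16 ht1
  have ht2' : ∀ᶠ m in atTop, dist (vm m) (d - u) < r / 16 :=
    (tendsto_iff_dist_tendsto_zero.mp hv_tend).eventually_lt_const hr16
  obtain ⟨m, hm2, hm1⟩ := (ht2'.and ht1').exists
  have e1 : ‖vm m‖ ≤ 4 * rho V₀ (vm m) := norm_le_rho V₀ x N (hvm_mem m)
  have e2 : rho V₀ d ≤ dist d (↑w : V) := Metric.infDist_le_dist_of_mem w.2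
  have e2' : rho V₀ d < r / 16 := lt_of_le_of_lt e2 (by rw [dist_comm]; exact hd_dist)
  have e3 : ‖d - u‖ ≤ ‖vm m‖ + dist (vm m) (d - u) := by
    have h7 : d - u = vm m + ((d - u) - vm m) := by abel
    calc ‖d - u‖ = ‖vm m + ((d - u) - vm m)‖ := by rw [← h7]
      _ ≤ ‖vm m‖ + ‖(d - u) - vm m‖ := norm_add_le _ _
      _ = ‖vm m‖ + dist (vm m) (d - u) := by rw [dist_comm, dist_eq_norm]
  have e4 : rho V₀ (vm m) < r / 8 := by
    have := hrho_vm m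
    linarith
  have e5 : ‖d - u‖ < r / 2 + r / 16 := by
    have : ‖vm m‖ ≤ 4 * rho V₀ (vm m) := e1
    nlinarith
  have e6 : ‖(↑w : V) - u‖ < r := by
    have h8 : (↑w : V) - u = ((↑w : V) - d) + (d - u) := by abel
    calc ‖(↑w : V) - u‖ = ‖((↑w : V) - d) + (d - u)‖ := by rw [← h8]
      _ ≤ ‖(↑w : V) - d‖ + ‖d - u‖ := norm_add_le _ _
      _ < r := by
          have h9 : ‖(↑w : V) - d‖ < r / 16 := by rw [← dist_eq_norm]; exact hd_dist
          linarith
  refine ⟨usub, ?_, husub⟩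
  rw [Metric.mem_ball, dist_eq_norm]
  have h10 : ‖usub - w‖ = ‖(↑(usub - w) : V)‖ := Submodule.coe_norm _
  rw [h10]
  have h11 : (↑(usub - w) : V) = u - (↑w : V) := by
    push_cast
    rw [hcoe]
  rw [h11, ← neg_sub, norm_neg]
  exact e6
end

section
/- Every closed subspace V_0 of a separable Banach space V over a nonarchimedean field K admits a closed complement: there exists a closed subspace V_1 of V such that the natural map V_0 ⊕ V_1 → V is an isomorphism of Banach spaces. -/
section Aux

variable {K V : Type*} [NontriviallyNormedField K]
  [NormedAddCommGroup V] [NormedSpace K V]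

/-- Existence of an "almost orthogonal" approximation vector. -/
lemma auxX_exists (W : Submodule K V) (u : V) {t : ℝ} (ht0 : 0 < t) (ht1 : t < 1) :
    ∃ x : V, (∀ y ∈ W, t * ‖x‖ ≤ ‖x + y‖) ∧
      ((Metric.infDist u (W : Set V) = 0 ∧ x = 0) ∨ u - x ∈ W) := by
  by_cases hd : Metric.infDist u (W : Set V) = 0
  · exact ⟨0, fun y _ => by simpa using norm_nonneg y, Or.inl ⟨hd, rfl⟩⟩
  · have hdpos : 0 < Metric.infDist u (W : Set V) :=
      lt_of_le_of_ne Metric.infDist_nonneg (Ne.symm hd)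
    have hne : (W : Set V).Nonempty := ⟨0, W.zero_mem⟩
    have hlt : Metric.infDist u (W : Set V) < Metric.infDist u (W : Set V) / t := by
      rw [lt_div_iff₀ ht0]
      nlinarith
    obtain ⟨w, hwW, hw⟩ := (Metric.infDist_lt_iff hne).mp hlt
    refine ⟨u - w, fun y hy => ?_, Or.inr (by simpa using hwW)⟩
    have h1 : Metric.infDist u (W : Set V) ≤ ‖u - w + y‖ := by
      have hmem : w - y ∈ (W : Set V) := W.sub_mem hwW hy
      have := Metric.infDist_le_dist_of_mem (x := u) hmem
      rwa [dist_eq_norm, show u - (w - y) = u - w + y by abel] at this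
    have h2 : t * ‖u - w‖ < Metric.infDist u (W : Set V) := by
      rw [dist_eq_norm] at hw
      calc t * ‖u - w‖ < t * (Metric.infDist u (W : Set V) / t) :=
            mul_lt_mul_of_pos_left hw ht0
        _ = Metric.infDist u (W : Set V) := by field_simp
    linarith

variable [IsUltrametricDist V]

lemma step_bound {W : Submodule K V} {x : V} {t : ℝ}
    (ht1 : t ≤ 1) (hx : ∀ y ∈ W, t * ‖x‖ ≤ ‖x + y‖) :
    ∀ y ∈ W, ∀ a : K, t * max ‖y‖ ‖a • x‖ ≤ ‖y + a • x‖ := by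
  intro y hy a
  rcases eq_or_ne a 0 with rfl | ha
  · simp only [zero_smul, add_zero, norm_zero, max_eq_left (norm_nonneg y)]
    exact mul_le_of_le_one_left (norm_nonneg _) ht1
  · have h1 : t * ‖a • x‖ ≤ ‖y + a • x‖ := by
      have hmem : a⁻¹ • y ∈ W := W.smul_mem _ hy
      have hb := hx (a⁻¹ • y) hmem
      have h2 : ‖y + a • x‖ = ‖a‖ * ‖x + a⁻¹ • y‖ := by
        rw [← norm_smul, smul_add, smul_smul, mul_inv_cancel₀ ha, one_smul, add_comm]
      calc t * ‖a • x‖ = ‖a‖ * (t * ‖x‖) := by rw [norm_smul]; ring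
        _ ≤ ‖a‖ * ‖x + a⁻¹ • y‖ := mul_le_mul_of_nonneg_left hb (norm_nonneg a)
        _ = ‖y + a • x‖ := h2.symm
    rcases le_or_gt ‖y‖ ‖a • x‖ with h | h
    · rw [max_eq_right h]; exact h1
    · rw [max_eq_left h.le]
      have hmax : ‖y‖ ≤ max ‖y + a • x‖ ‖a • x‖ := by
        calc ‖y‖ = ‖(y + a • x) + (-(a • x))‖ := by rw [add_neg_cancel_right]
          _ ≤ max ‖y + a • x‖ ‖-(a • x)‖ := IsUltrametricDist.norm_add_le_max _ _
          _ = max ‖y + a • x‖ ‖a • x‖ := by rw [norm_neg]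
      have hy' : ‖y‖ ≤ ‖y + a • x‖ := by
        rcases le_max_iff.mp hmax with h' | h'
        · exact h'
        · exact absurd h' (not_le.mpr h)
      calc t * ‖y‖ ≤ ‖y‖ := mul_le_of_le_one_left (norm_nonneg _) ht1
        _ ≤ ‖y + a • x‖ := hy'

end Aux

set_option maxHeartbeats 1000000 in
/-- Every closed subspace `V₀` of a separable Banach space `V` over a
nonarchimedean field admits a closed complement `V₁`: then the natural map
`V₀ ⊕ V₁ → V` is automatically an isomorphism of Banach spaces. -/
theorem closed_subspace_complemented
    {K : Type*} [NontriviallyNormedField K] [IsUltrametricDist K]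
    {V : Type*} [NormedAddCommGroup V] [NormedSpace K V] [CompleteSpace V]
    [IsUltrametricDist V]
    (hsep : CountablyGenerated K V)
    (V₀ : Submodule K V) (hclosed : IsClosed (V₀ : Set V)) :
    ∃ V₁ : Submodule K V, IsClosed (V₁ : Set V) ∧ IsCompl V₀ V₁ := by
  classical
  -- get a countable dense "basis" sequence
  obtain ⟨s, hscount, hsdense⟩ := hsep
  obtain ⟨v, hv⟩ : ∃ v : ℕ → V, Dense (Submodule.span K (Set.range v) : Set V) := by
    obtain ⟨f, hf⟩ := (hscount.insert 0).exists_eq_range ⟨0, Set.mem_insert 0 s⟩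
    refine ⟨f, ?_⟩
    rw [← hf, Submodule.span_insert_zero]
    exact hsdense
  -- the orthogonality constants
  set t : ℕ → ℝ := fun n => (2 : ℝ) ^ (-(2⁻¹ : ℝ) ^ (n + 1)) with ht_def
  have ht0 : ∀ n, 0 < t n := fun n => Real.rpow_pos_of_pos two_pos _
  have ht1 : ∀ n, t n < 1 := fun n =>
    Real.rpow_lt_one_of_one_lt_of_neg one_lt_two
      (neg_lt_zero.mpr (pow_pos (by norm_num) _))
  set c : ℕ → ℝ := fun n => ∏ i ∈ Finset.range n, t i with hc_def
  have hc0 : ∀ n, 0 < c n := fun n => Finset.prod_pos fun i _ => ht0 i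
  have hc1 : ∀ n, c n ≤ 1 := fun n =>
    Finset.prod_le_one (fun i _ => (ht0 i).le) (fun i _ => (ht1 i).le)
  have hchalf : ∀ n, (2⁻¹ : ℝ) ≤ c n := by
    intro n
    have hprod : ∀ m : ℕ, (∏ i ∈ Finset.range m, t i)
        = (2 : ℝ) ^ (-(∑ i ∈ Finset.range m, (2⁻¹ : ℝ) ^ (i + 1))) := by
      intro m
      induction m with
      | zero => simp
      | succ m ih =>
        rw [Finset.prod_range_succ, Finset.sum_range_succ, ih, neg_add,
          Real.rpow_add two_pos]
    have hsum : ∑ i ∈ Finset.range n, (2⁻¹ : ℝ) ^ (i + 1) ≤ 1 := by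
      have key : ∀ m : ℕ, ∑ i ∈ Finset.range m, (2⁻¹ : ℝ) ^ (i + 1) = 1 - (2⁻¹ : ℝ) ^ m := by
        intro m
        induction m with
        | zero => simp
        | succ k ih => rw [Finset.sum_range_succ, ih]; ring
      rw [key n]
      have := pow_nonneg (by norm_num : (0:ℝ) ≤ 2⁻¹) n
      linarith
    rw [show c n = _ from hprod n]
    calc (2⁻¹ : ℝ) = (2 : ℝ) ^ (-1 : ℝ) := by
          rw [Real.rpow_neg_one]
      _ ≤ (2 : ℝ) ^ (-(∑ i ∈ Finset.range n, (2⁻¹ : ℝ) ^ (i + 1))) := by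
          apply Real.rpow_le_rpow_left_iff (by norm_num : (1:ℝ) < 2) |>.mpr
          linarith
  -- the inductive construction
  obtain ⟨W, x, hW0, hWsucc, hxspec⟩ :
      ∃ (W : ℕ → Submodule K V) (x : ℕ → V), W 0 = V₀ ∧
        (∀ n, W (n + 1) = W n ⊔ Submodule.span K {x n}) ∧
        ∀ n, (∀ y ∈ W n, t n * ‖x n‖ ≤ ‖x n + y‖) ∧
          ((Metric.infDist (v n) (W n : Set V) = 0 ∧ x n = 0) ∨ v n - x n ∈ W n) := by
    refine ⟨fun n => Nat.rec V₀
        (fun m Wm => Wm ⊔ Submodule.span K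
          {(auxX_exists Wm (v m) (ht0 m) (ht1 m)).choose}) n,
      fun n => (auxX_exists (Nat.rec V₀
        (fun m Wm => Wm ⊔ Submodule.span K
          {(auxX_exists Wm (v m) (ht0 m) (ht1 m)).choose}) n) (v n) (ht0 n) (ht1 n)).choose,
      rfl, fun n => rfl, fun n => (auxX_exists _ (v n) (ht0 n) (ht1 n)).choose_spec⟩
  have hWmono : Monotone W := by
    apply monotone_nat_of_le_succ
    intro n
    rw [hWsucc n]
    exact le_sup_left
  have hV₀W : ∀ n, V₀ ≤ W n := fun n => hW0 ▸ hWmono (Nat.zero_le n)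
  have hxW : ∀ i n, i < n → x i ∈ W n := by
    intro i n hin
    have h1 : x i ∈ W (i + 1) := by
      rw [hWsucc i]
      exact Submodule.mem_sup_right (Submodule.mem_span_singleton_self _)
    exact hWmono hin h1
  -- the main norm estimate, by induction
  have B : ∀ n (a : ℕ → K), ∀ v₀ ∈ V₀,
      c n * max ‖v₀‖ (((Finset.range n).sup fun i => ‖a i • x i‖₊ : NNReal) : ℝ) ≤
        ‖v₀ + ∑ i ∈ Finset.range n, a i • x i‖ := by
    intro n
    induction n with
    | zero =>
      intro a v₀ hv₀
      simp [hc_def]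
    | succ n ih =>
      intro a v₀ hv₀
      set y := v₀ + ∑ i ∈ Finset.range n, a i • x i with hy_def
      have hyW : y ∈ W n :=
        (W n).add_mem (hV₀W n hv₀)
          (Submodule.sum_mem _ fun i hi =>
            (W n).smul_mem _ (hxW i n (Finset.mem_range.mp hi)))
      have hstep := step_bound (ht1 n).le (hxspec n).1 y hyW (a n)
      have hsum_eq : v₀ + ∑ i ∈ Finset.range (n + 1), a i • x i = y + a n • x n := by
        rw [hy_def, Finset.sum_range_succ, add_assoc]
      rw [hsum_eq]
      have hsup : (((Finset.range (n + 1)).sup fun i => ‖a i • x i‖₊ : NNReal) : ℝ) =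
          max (((Finset.range n).sup fun i => ‖a i • x i‖₊ : NNReal) : ℝ) ‖a n • x n‖ := by
        rw [Finset.range_add_one, Finset.sup_insert]
        push_cast
        rw [max_comm]
        try simp [coe_nnnorm]
      rw [hsup]
      set S := (((Finset.range n).sup fun i => ‖a i • x i‖₊ : NNReal) : ℝ) with hS_def
      set A := ‖a n • x n‖ with hA_def
      have hcsucc : c (n + 1) = c n * t n := Finset.prod_range_succ _ _
      have hmax_assoc : max ‖v₀‖ (max S A) = max (max ‖v₀‖ S) A := (max_assoc _ _ _).symm
      rw [hcsucc, hmax_assoc]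
      have h1 : c n * max (max ‖v₀‖ S) A = max (c n * max ‖v₀‖ S) (c n * A) :=
        mul_max_of_nonneg _ _ (hc0 n).le
      have h2 : max (c n * max ‖v₀‖ S) (c n * A) ≤ max ‖y‖ A := by
        apply max_le
        · exact le_max_of_le_left ((ih a v₀ hv₀).trans_eq (by rw [hy_def]))
        · exact le_max_of_le_right
            (mul_le_of_le_one_left (norm_nonneg _) (hc1 n))
      calc c n * t n * max (max ‖v₀‖ S) A = t n * (c n * max (max ‖v₀‖ S) A) := by ring
        _ = t n * max (c n * max ‖v₀‖ S) (c n * A) := by rw [h1]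
        _ ≤ t n * max ‖y‖ A := mul_le_mul_of_nonneg_left h2 (ht0 n).le
        _ ≤ ‖y + a n • x n‖ := hstep
  -- the key inequality, on the span
  have P1span : ∀ y ∈ Submodule.span K (Set.range x), ∀ v₀ ∈ V₀,
      2⁻¹ * ‖y‖ ≤ ‖v₀ + y‖ := by
    intro y hy v₀ hv₀
    obtain ⟨f, rfl⟩ := Finsupp.mem_span_range_iff_exists_finsupp.mp hy
    set n := (f.support.sup id) + 1 with hn_def
    have hsub : f.support ⊆ Finset.range n := by
      intro i hi
      rw [Finset.mem_range, hn_def]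
      exact Nat.lt_succ_of_le (Finset.le_sup (f := id) hi)
    have heq : (f.sum fun i a => a • x i) = ∑ i ∈ Finset.range n, f i • x i := by
      rw [Finsupp.sum]
      apply Finset.sum_subset hsub
      intro i _ hnot
      rw [Finsupp.notMem_support_iff.mp hnot, zero_smul]
    rw [heq]
    have hB := B n (fun i => f i) v₀ hv₀
    have hnorm_le : ‖∑ i ∈ Finset.range n, f i • x i‖ ≤
        (((Finset.range n).sup fun i => ‖f i • x i‖₊ : NNReal) : ℝ) := by
      have := Finset.nnnorm_sum_le_sup_nnnorm (Finset.range n) (fun i => f i • x i)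
      exact_mod_cast this
    calc 2⁻¹ * ‖∑ i ∈ Finset.range n, f i • x i‖
        ≤ c n * max ‖v₀‖ (((Finset.range n).sup fun i => ‖f i • x i‖₊ : NNReal) : ℝ) := by
          apply mul_le_mul (hchalf n) (hnorm_le.trans (le_max_right _ _)) (norm_nonneg _)
            (hc0 n).le
      _ ≤ _ := hB
  -- the complement
  set V₁ := (Submodule.span K (Set.range x)).topologicalClosure with hV₁_def
  have hV₁closed : IsClosed (V₁ : Set V) := Submodule.isClosed_topologicalClosure _
  -- the key inequality extends to the closure
  have P1 : ∀ y ∈ V₁, ∀ v₀ ∈ V₀, 2⁻¹ * ‖y‖ ≤ ‖v₀ + y‖ := by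
    intro y hy v₀ hv₀
    have hyc : y ∈ closure (Submodule.span K (Set.range x) : Set V) := hy
    have hcl : IsClosed {z : V | 2⁻¹ * ‖z‖ ≤ ‖v₀ + z‖} := by
      apply isClosed_le
      · exact (continuous_const.mul continuous_norm)
      · exact (continuous_const.add continuous_id).norm
    have hsubset : (Submodule.span K (Set.range x) : Set V) ⊆
        {z : V | 2⁻¹ * ‖z‖ ≤ ‖v₀ + z‖} := fun z hz => P1span z hz v₀ hv₀
    exact (closure_minimal hsubset hcl) hyc
  -- disjointness
  have hdisj : Disjoint V₀ V₁ := by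
    rw [Submodule.disjoint_def]
    intro y hy₀ hy₁
    have := P1 y hy₁ (-y) (V₀.neg_mem hy₀)
    rw [neg_add_cancel, norm_zero] at this
    have hy0 : ‖y‖ ≤ 0 := by nlinarith [norm_nonneg y]
    exact norm_le_zero_iff.mp hy0
  -- the sum is closed
  set S := V₀ ⊔ V₁ with hS_def
  have hSclosed : IsClosed (S : Set V) := by
    apply IsSeqClosed.isClosed
    intro u z hu huz
    choose p hp q hq hpq using fun k => Submodule.mem_sup.mp (hu k)
    have hucauchy : CauchySeq u := huz.cauchySeq
    have hqcauchy : CauchySeq q := by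
      rw [Metric.cauchySeq_iff] at hucauchy ⊢
      intro ε hε
      obtain ⟨N, hN⟩ := hucauchy (ε / 2) (by linarith)
      refine ⟨N, fun k hk l hl => ?_⟩
      have hkey := P1 (q k - q l) (V₁.sub_mem (hq k) (hq l)) (p k - p l)
        (V₀.sub_mem (hp k) (hp l))
      have heq2 : p k - p l + (q k - q l) = u k - u l := by
        rw [← hpq k, ← hpq l]; abel
      rw [heq2] at hkey
      have hd : dist (q k) (q l) = ‖q k - q l‖ := dist_eq_norm _ _
      have hd2 : ‖u k - u l‖ = dist (u k) (u l) := (dist_eq_norm _ _).symm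
      have := hN k hk l hl
      rw [hd]
      nlinarith [dist_nonneg (x := q k) (y := q l)]
    obtain ⟨yl, hyl⟩ := cauchySeq_tendsto_of_complete hqcauchy
    have hylV₁ : yl ∈ V₁ := hV₁closed.mem_of_tendsto hyl
      (Filter.Eventually.of_forall hq)
    have hptend : Filter.Tendsto p Filter.atTop (nhds (z - yl)) := by
      have : p = fun k => u k - q k := by
        funext k; rw [← hpq k]; abel
      rw [this]
      exact huz.sub hyl
    have hplV₀ : z - yl ∈ V₀ := hclosed.mem_of_tendsto hptend
      (Filter.Eventually.of_forall hp)
    have : z = (z - yl) + yl := by abel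
    rw [this]
    exact Submodule.mem_sup.mpr ⟨z - yl, hplV₀, yl, hylV₁, rfl⟩
  -- the sum is dense
  have hWS : ∀ n, W n ≤ S := by
    intro n
    induction n with
    | zero => rw [hW0]; exact le_sup_left
    | succ m ih =>
      rw [hWsucc m]
      apply sup_le ih
      rw [Submodule.span_le, Set.singleton_subset_iff]
      have hx_mem : x m ∈ V₁ :=
        Submodule.le_topologicalClosure _ (Submodule.subset_span ⟨m, rfl⟩)
      exact le_sup_right (α := Submodule K V) hx_mem
  have hvS : ∀ n, v n ∈ closure (S : Set V) := by
    intro n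
    rcases (hxspec n).2 with ⟨hd0, _⟩ | hmem
    · have : v n ∈ closure ((W n : Set V)) :=
        (Metric.mem_closure_iff_infDist_zero ⟨0, (W n).zero_mem⟩).mpr hd0
      exact closure_mono (hWS n) this
    · have hxn : x n ∈ W (n + 1) := by
        rw [hWsucc n]
        exact Submodule.mem_sup_right (Submodule.mem_span_singleton_self _)
      have hvn : v n ∈ W (n + 1) := by
        have : v n = (v n - x n) + x n := by abel
        rw [this]
        exact (W (n + 1)).add_mem (hWmono (Nat.le_succ n) hmem) hxn
      exact subset_closure (hWS (n + 1) hvn)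
  have hStop : S = ⊤ := by
    have hdense : Dense (S : Set V) := by
      have hsub : (Submodule.span K (Set.range v) : Set V) ⊆ closure (S : Set V) := by
        have h1 : Submodule.span K (Set.range v) ≤ S.topologicalClosure := by
          rw [Submodule.span_le]
          rintro _ ⟨n, rfl⟩
          exact hvS n
        exact h1
      intro z
      have : closure (Submodule.span K (Set.range v) : Set V) ⊆
          closure (closure (S : Set V)) := closure_mono hsub
      rw [closure_closure] at this
      exact this (hv z)
    rw [Submodule.eq_top_iff']
    intro z
    have := hdense z
    rwa [hSclosed.closure_eq] at this
  refine ⟨V₁, hV₁closed, ⟨hdisj, codisjoint_iff.mpr hStop⟩⟩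
end

section
/- Let f : V → V' be a surjective continuous K-linear map of separable Banach spaces over a nonarchimedean field K. Then there exists a continuous K-linear map g : V' → V with f ∘ g = id_{V'}. -/
/-- A continuous surjective `K`-linear map of separable Banach spaces
over a nonarchimedean field admits a continuous linear section. -/
theorem surjective_splits
    {K : Type*} [NontriviallyNormedField K] [IsUltrametricDist K]
    {V V' : Type*} [NormedAddCommGroup V] [NormedSpace K V] [CompleteSpace V]
    [IsUltrametricDist V]
    [NormedAddCommGroup V'] [NormedSpace K V'] [CompleteSpace V'] [IsUltrametricDist V']
    (hsepV : CountablyGenerated K V) (hsepV' : CountablyGenerated K V')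
    (f : V →L[K] V') (hsurj : Function.Surjective f) :
    ∃ g : V' →L[K] V, f.comp g = ContinuousLinearMap.id K V' := by
  classical
  obtain ⟨C, hC0, hC⟩ := f.exists_preimage_norm_le hsurj
  choose pre hpre hprenorm using hC
  obtain ⟨s, hsc, hsd⟩ := hsepV'
  obtain ⟨v, hv⟩ := (hsc.insert 0).exists_eq_range (Set.insert_nonempty _ _)
  -- the increasing sequence of bound constants
  set M : ℕ → ℝ := fun n => C * (2 - (2⁻¹ : ℝ) ^ n) with hMdef
  have hhalf : ∀ n : ℕ, (0:ℝ) < (2⁻¹ : ℝ) ^ n := fun n => pow_pos (by norm_num) n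
  have hhalfle : ∀ n : ℕ, (2⁻¹ : ℝ) ^ n ≤ 1 := fun n =>
    pow_le_one₀ (by norm_num) (by norm_num)
  have hMpos : ∀ n, 0 < M n := by
    intro n
    have := hhalfle n
    simp only [hMdef]
    nlinarith [hhalf n]
  have hCleM : ∀ n, C ≤ M n := by
    intro n
    have := hhalfle n
    simp only [hMdef]
    nlinarith
  have hMlt : ∀ n, M n < M (n + 1) := by
    intro n
    simp only [hMdef]
    have h1 : (2⁻¹ : ℝ) ^ (n + 1) < (2⁻¹ : ℝ) ^ n :=
      pow_lt_pow_right_of_lt_one₀ (by norm_num) (by norm_num) (by omega)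
    nlinarith
  have hMle2C : ∀ n, M n ≤ 2 * C := by
    intro n
    have := hhalf n
    simp only [hMdef]
    nlinarith
  set r : ℕ → ℝ := fun n => M (n + 1) / M n with hrdef
  have hr1 : ∀ n, 1 ≤ r n := fun n => (one_le_div (hMpos n)).2 (hMlt n).le
  have hr0 : ∀ n, 0 ≤ r n := fun n => le_trans zero_le_one (hr1 n)
  have hMr : ∀ n, M n * r n = M (n + 1) := by
    intro n
    rw [hrdef]
    exact mul_div_cancel₀ _ (hMpos n).ne'
  -- choice of the orthogonalized vector at each step
  have hWex : ∀ (n : ℕ) (E : Submodule K V'), ∃ wn : V',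
      (Metric.infDist (v n) (E : Set V') = 0 → wn = 0) ∧
      (Metric.infDist (v n) (E : Set V') ≠ 0 →
        v n - wn ∈ E ∧ ‖wn‖ ≤ r n * Metric.infDist (v n) (E : Set V')) := by
    intro n E
    by_cases hd : Metric.infDist (v n) (E : Set V') = 0
    · exact ⟨0, fun _ => rfl, fun h => absurd hd h⟩
    · have hdpos : 0 < Metric.infDist (v n) (E : Set V') :=
        lt_of_le_of_ne Metric.infDist_nonneg (Ne.symm hd)
      have hrn : 1 < r n := by
        rw [hrdef]
        exact (one_lt_div (hMpos n)).2 (hMlt n)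
      have hlt : Metric.infDist (v n) (E : Set V') < r n * Metric.infDist (v n) (E : Set V') := by
        nlinarith
      obtain ⟨y, hyE, hy⟩ := (Metric.infDist_lt_iff ⟨0, E.zero_mem⟩).1 hlt
      refine ⟨v n - y, fun h => absurd h hd, fun _ => ⟨by simpa using hyE, ?_⟩⟩
      rw [← dist_eq_norm]
      exact hy.le
  choose W hW0 hW1 using hWex
  -- the recursive construction
  set wseq : ℕ → ℕ → V' := fun n => Nat.rec (fun _ => (0 : V'))
    (fun m prev => Function.update prev m
      (W m (Submodule.span K (prev '' Set.Iio m)))) n with hwseq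
  set w : ℕ → V' := fun n => wseq (n + 1) n with hwdef2
  have hsucc : ∀ a, wseq (a + 1) = Function.update (wseq a) a
      (W a (Submodule.span K (wseq a '' Set.Iio a))) := by
    intro a
    simp only [hwseq]
  have hstep : ∀ a n, n < a → wseq (a + 1) n = wseq a n := by
    intro a n hn
    rw [hsucc]
    exact Function.update_of_ne (Nat.ne_of_lt hn) _ _
  have hagree' : ∀ b a n, n < a → a ≤ b → wseq b n = wseq a n := by
    intro b
    induction b with
    | zero => intro a n hn hab; omega
    | succ b ih =>
      intro a n hn hab
      rcases Nat.lt_or_ge a (b + 1) with h | h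
      · rw [hstep b n (by omega)]
        exact ih a n hn (by omega)
      · have hab' : a = b + 1 := by omega
        rw [hab']
  have hagree : ∀ a n, n < a → wseq a n = w n := by
    intro a n hn
    simp only [hwdef2]
    rcases Nat.lt_or_ge (n + 1) a with h | h
    · exact hagree' a (n + 1) n (Nat.lt_succ_self n) (by omega)
    · have : a = n + 1 := by omega
      rw [this]
  set E : ℕ → Submodule K V' := fun n => Submodule.span K (w '' Set.Iio n) with hEdef
  have hEeq : ∀ n, Submodule.span K (wseq n '' Set.Iio n) = E n := by
    intro n
    rw [hEdef]
    congr 1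
    exact Set.image_congr fun i hi => hagree n i hi
  have hwW : ∀ n, w n = W n (E n) := by
    intro n
    simp only [hwdef2]
    rw [hsucc, Function.update_self, hEeq]
  set d : ℕ → ℝ := fun n => Metric.infDist (v n) ((E n : Set V')) with hddef
  have hw0 : ∀ n, d n = 0 → w n = 0 := by
    intro n hdn; rw [hwW]; exact hW0 n (E n) hdn
  have hw1 : ∀ n, d n ≠ 0 → v n - w n ∈ E n ∧ ‖w n‖ ≤ r n * d n := by
    intro n hdn; rw [hwW]; exact hW1 n (E n) hdn
  set u : ℕ → V := fun n => pre (w n) with hudef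
  have hu0 : ∀ n, w n = 0 → u n = 0 := by
    intro n hwn
    have h1 : ‖u n‖ ≤ C * ‖w n‖ := hprenorm (w n)
    rw [hwn] at h1
    simp only [norm_zero, mul_zero] at h1
    exact norm_le_zero_iff.1 h1
  have hfu : ∀ n, f (u n) = w n := fun n => hpre (w n)
  -- the key uniform bound, by induction
  have key : ∀ (n : ℕ) (c : ℕ → K),
      ‖∑ i ∈ Finset.range n, c i • u i‖ ≤ M n * ‖∑ i ∈ Finset.range n, c i • w i‖ := by
    intro n c
    induction n with
    | zero => simp
    | succ n ih =>
      rw [Finset.sum_range_succ, Finset.sum_range_succ]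
      set e := ∑ i ∈ Finset.range n, c i • w i with hedef
      set eu := ∑ i ∈ Finset.range n, c i • u i with heudef
      have heE : e ∈ E n := by
        apply Submodule.sum_mem
        intro i hi
        exact Submodule.smul_mem _ _ (Submodule.subset_span ⟨i, Finset.mem_range.1 hi, rfl⟩)
      have hMn1 : M n ≤ M (n + 1) := (hMlt n).le
      by_cases hd : d n = 0
      · have hwn := hw0 n hd
        have hun := hu0 n hwn
        rw [hwn, hun, smul_zero, smul_zero, add_zero, add_zero]
        exact le_trans ih (mul_le_mul_of_nonneg_right hMn1 (norm_nonneg _))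
      · obtain ⟨hyE, hwn⟩ := hw1 n hd
        by_cases ha : c n = 0
        · rw [ha, zero_smul, zero_smul, add_zero, add_zero]
          exact le_trans ih (mul_le_mul_of_nonneg_right hMn1 (norm_nonneg _))
        · set x := e + c n • w n with hxdef
          have hxlb : ‖c n‖ * d n ≤ ‖x‖ := by
            set z := (v n - w n) - (c n)⁻¹ • e with hzdef
            have hzE : z ∈ E n := Submodule.sub_mem _ hyE (Submodule.smul_mem _ _ heE)
            have hxz : x = c n • (v n - z) := by
              rw [hxdef, hzdef, smul_sub, smul_sub, smul_sub, smul_inv_smul₀ ha]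
              abel
            have h1 : d n ≤ ‖v n - z‖ := by
              rw [hddef, ← dist_eq_norm]
              exact Metric.infDist_le_dist_of_mem hzE
            calc ‖c n‖ * d n ≤ ‖c n‖ * ‖v n - z‖ :=
                  mul_le_mul_of_nonneg_left h1 (norm_nonneg _)
              _ = ‖x‖ := by rw [hxz, norm_smul]
          have hwnx : ‖c n‖ * ‖w n‖ ≤ r n * ‖x‖ := by
            calc ‖c n‖ * ‖w n‖ ≤ ‖c n‖ * (r n * d n) :=
                  mul_le_mul_of_nonneg_left hwn (norm_nonneg _)
              _ = r n * (‖c n‖ * d n) := by ring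
              _ ≤ r n * ‖x‖ := mul_le_mul_of_nonneg_left hxlb (hr0 n)
          have h1 : ‖c n • u n‖ ≤ M (n + 1) * ‖x‖ := by
            have hun : ‖u n‖ ≤ C * ‖w n‖ := hprenorm (w n)
            calc ‖c n • u n‖ = ‖c n‖ * ‖u n‖ := norm_smul _ _
              _ ≤ ‖c n‖ * (C * ‖w n‖) := mul_le_mul_of_nonneg_left hun (norm_nonneg _)
              _ = C * (‖c n‖ * ‖w n‖) := by ring
              _ ≤ C * (r n * ‖x‖) := mul_le_mul_of_nonneg_left hwnx hC0.le
              _ = C * r n * ‖x‖ := by ring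
              _ ≤ M n * r n * ‖x‖ := by
                  refine mul_le_mul_of_nonneg_right ?_ (norm_nonneg _)
                  exact mul_le_mul_of_nonneg_right (hCleM n) (hr0 n)
              _ = M (n + 1) * ‖x‖ := by rw [hMr]
          have h2 : ‖eu‖ ≤ M (n + 1) * ‖x‖ := by
            have hex : ‖e‖ ≤ r n * ‖x‖ := by
              have heq : e = x + (-(c n • w n)) := by rw [hxdef]; abel
              rw [heq]
              refine le_trans (IsUltrametricDist.norm_add_le_max _ _) (max_le ?_ ?_)
              · calc ‖x‖ = 1 * ‖x‖ := (one_mul _).symm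
                  _ ≤ r n * ‖x‖ := mul_le_mul_of_nonneg_right (hr1 n) (norm_nonneg _)
              · rw [norm_neg, norm_smul]; exact hwnx
            calc ‖eu‖ ≤ M n * ‖e‖ := ih
              _ ≤ M n * (r n * ‖x‖) := mul_le_mul_of_nonneg_left hex (hMpos n).le
              _ = M n * r n * ‖x‖ := by ring
              _ = M (n + 1) * ‖x‖ := by rw [hMr]
          calc ‖eu + c n • u n‖ ≤ max ‖eu‖ ‖c n • u n‖ :=
                IsUltrametricDist.norm_add_le_max _ _
            _ ≤ M (n + 1) * ‖x‖ := max_le h2 h1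
  -- density of the span of the w's
  set D : Submodule K V' := Submodule.span K (Set.range w) with hDdef
  have hED : ∀ n, E n ≤ D := by
    intro n
    rw [hEdef, hDdef]
    apply Submodule.span_mono
    rintro _ ⟨i, _, rfl⟩
    exact ⟨i, rfl⟩
  have hdense : Dense (D : Set V') := by
    have hsub : Set.range v ⊆ closure (D : Set V') := by
      rintro _ ⟨n, rfl⟩
      by_cases hd : d n = 0
      · have h1 : v n ∈ closure (E n : Set V') :=
          (Metric.mem_closure_iff_infDist_zero ⟨0, (E n).zero_mem⟩).2 hd
        exact closure_mono (hED n) h1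
      · obtain ⟨hyE, _⟩ := hw1 n hd
        have hvn : v n = (v n - w n) + w n := by abel
        rw [hvn]
        apply subset_closure
        exact D.add_mem (hED n hyE)
          (by rw [hDdef]; exact Submodule.subset_span ⟨n, rfl⟩)
    have hclosed : Submodule.span K (Set.range v) ≤ D.topologicalClosure := by
      rw [Submodule.span_le]
      intro x hx
      exact hsub hx
    have hvspan : Dense (Submodule.span K (Set.range v) : Set V') := by
      rw [← hv, Submodule.span_insert_zero]
      exact hsd
    have h1 : closure (D : Set V') = Set.univ := by
      apply Set.eq_univ_of_univ_subset
      calc Set.univ = closure (Submodule.span K (Set.range v) : Set V') :=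
            hvspan.closure_eq.symm
        _ ⊆ closure (D.topologicalClosure : Set V') := closure_mono hclosed
        _ = closure (closure (D : Set V')) := by rw [Submodule.topologicalClosure_coe]
        _ = closure (D : Set V') := closure_closure
    rw [dense_iff_closure_eq, h1]
  -- the uniform bound for finitely supported combinations
  have hbound : ∀ cf : ℕ →₀ K, ‖Finsupp.linearCombination K u cf‖ ≤
      (2 * C) * ‖Finsupp.linearCombination K w cf‖ := by
    intro cf
    set n := (cf.support.sup id) + 1 with hndef
    have hsupp : cf.support ⊆ Finset.range n := by
      intro i hi
      rw [Finset.mem_range, hndef]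
      exact Nat.lt_succ_of_le (Finset.le_sup (f := id) hi)
    have hw' : Finsupp.linearCombination K w cf = ∑ i ∈ Finset.range n, cf i • w i := by
      rw [Finsupp.linearCombination_apply, Finsupp.sum]
      exact Finset.sum_subset hsupp fun i _ hni => by
        rw [Finsupp.notMem_support_iff.1 hni, zero_smul]
    have hu' : Finsupp.linearCombination K u cf = ∑ i ∈ Finset.range n, cf i • u i := by
      rw [Finsupp.linearCombination_apply, Finsupp.sum]
      exact Finset.sum_subset hsupp fun i _ hni => by
        rw [Finsupp.notMem_support_iff.1 hni, zero_smul]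
    rw [hw', hu']
    exact le_trans (key n cf) (mul_le_mul_of_nonneg_right (hMle2C n) (norm_nonneg _))
  have hker : ∀ c c' : ℕ →₀ K,
      Finsupp.linearCombination K w c = Finsupp.linearCombination K w c' →
      Finsupp.linearCombination K u c = Finsupp.linearCombination K u c' := by
    intro c c' h
    have h1 := hbound (c - c')
    rw [map_sub, map_sub, h, sub_self, norm_zero, mul_zero] at h1
    exact sub_eq_zero.1 (norm_le_zero_iff.1 h1)
  have hfT : ∀ c : ℕ →₀ K,
      f (Finsupp.linearCombination K u c) = Finsupp.linearCombination K w c := by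
    intro c
    rw [Finsupp.linearCombination_apply, Finsupp.linearCombination_apply,
      Finsupp.sum, Finsupp.sum, map_sum]
    exact Finset.sum_congr rfl fun i _ => by rw [map_smul, hfu]
  have hrepex : ∀ x : D, ∃ cf : ℕ →₀ K, Finsupp.linearCombination K w cf = (x : V') := by
    intro x
    have hx : (x : V') ∈ Submodule.span K (Set.range w) := by rw [← hDdef]; exact x.2
    obtain ⟨cf, hcf⟩ := Finsupp.mem_span_range_iff_exists_finsupp.1 hx
    exact ⟨cf, by rw [Finsupp.linearCombination_apply]; exact hcf⟩
  choose rep hrepc using hrepex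
  have hg0 : ∀ (x : D) (cf : ℕ →₀ K), Finsupp.linearCombination K w cf = (x : V') →
      Finsupp.linearCombination K u (rep x) = Finsupp.linearCombination K u cf :=
    fun x cf hcf => hker _ _ ((hrepc x).trans hcf.symm)
  set g0 : D →ₗ[K] V :=
    { toFun := fun x => Finsupp.linearCombination K u (rep x)
      map_add' := fun x y =>
        (hg0 (x + y) (rep x + rep y)
          (by rw [map_add, hrepc x, hrepc y, Submodule.coe_add])).trans (map_add _ _ _)
      map_smul' := fun a x =>
        (hg0 (a • x) (a • rep x)
          (by rw [map_smul, hrepc x, Submodule.coe_smul])).trans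
          (map_smul _ _ _) } with hg0def
  have hg0bound : ∀ x : D, ‖g0 x‖ ≤ (2 * C) * ‖x‖ := by
    intro x
    have h1 := hbound (rep x)
    rw [hrepc x] at h1
    simpa [hg0def] using h1
  set gc : D →L[K] V := g0.mkContinuous (2 * C) hg0bound with hgcdef
  have hdr : DenseRange (D.subtypeL : D →L[K] V') := by
    simpa [DenseRange, Subtype.range_coe] using hdense
  have hui : IsUniformInducing (D.subtypeL : D →L[K] V') :=
    isUniformEmbedding_subtype_val.isUniformInducing
  refine ⟨gc.extend D.subtypeL, ?_⟩
  apply ContinuousLinearMap.ext_on (s := (D : Set V')) (by rwa [Submodule.span_eq])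
  intro x hx
  have h1 : (gc.extend D.subtypeL) x = gc ⟨x, hx⟩ :=
    ContinuousLinearMap.extend_eq gc hdr hui ⟨x, hx⟩
  calc (f.comp (gc.extend D.subtypeL)) x
      = f (gc ⟨x, hx⟩) := by rw [ContinuousLinearMap.comp_apply, h1]
    _ = f (Finsupp.linearCombination K u (rep ⟨x, hx⟩)) := by
        rw [hgcdef]
        rfl
    _ = Finsupp.linearCombination K w (rep ⟨x, hx⟩) := hfT _
    _ = x := hrepc _
end

section
/- Let f : V → V' be a continuous K-linear map of separable Banach spaces over a nonarchimedean field K whose cokernel is finite-dimensional. Then there exists a continuous K-linear map g : V' → V such that f ∘ g − id_{V'} has finite rank (i.e., finite-dimensional image). -/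
open Metric Filter Set

namespace ApproxSection

variable {K : Type*} [NontriviallyNormedField K] [IsUltrametricDist K]

theorem exists_section {E F : Type*}
    [NormedAddCommGroup E] [NormedSpace K E] [CompleteSpace E] [IsUltrametricDist E]
    [NormedAddCommGroup F] [NormedSpace K F] [CompleteSpace F] [IsUltrametricDist F]
    (hsep : CountablyGenerated K F) (T : E →L[K] F) (hsurj : Function.Surjective T) :
    ∃ s : F →L[K] E, ∀ y, T (s y) = y := by
  obtain ⟨C, hC0, hC⟩ := T.exists_preimage_norm_le hsurj
  -- a countable dense-span sequence
  obtain ⟨s0, hs0c, hs0d⟩ := hsep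
  obtain ⟨u, hu⟩ := (hs0c.insert 0).exists_eq_range (insert_nonempty 0 s0)
  have hudense : Dense (Submodule.span K (Set.range u) : Set F) := by
    rw [← hu, Submodule.span_insert_zero]; exact hs0d
  -- constants
  set r : ℕ → ℝ := fun n => 1 + (1 / 2) ^ n with hr_def
  have hr1 : ∀ n, 1 ≤ r n := fun n =>
    le_add_of_nonneg_right (by positivity)
  set P : ℕ → ℝ := fun n => ∏ j ∈ Finset.range n, r j with hP_def
  have hP1 : ∀ n, 1 ≤ P n := by
    intro n
    calc (1 : ℝ) = ∏ _j ∈ Finset.range n, 1 := by simp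
      _ ≤ P n := Finset.prod_le_prod (by norm_num) fun j _ => hr1 j
  have hPsucc : ∀ n, P (n + 1) = P n * r n := fun n => Finset.prod_range_succ _ _
  have hPB : ∀ n, P n ≤ Real.exp 2 := by
    intro n
    have h1 : P n ≤ ∏ j ∈ Finset.range n, Real.exp ((1 / 2) ^ j) := by
      refine Finset.prod_le_prod (fun j _ => by positivity) fun j _ => ?_
      simpa [hr_def, add_comm] using Real.add_one_le_exp ((1 / 2 : ℝ) ^ j)
    rw [← Real.exp_sum] at h1
    exact h1.trans (Real.exp_le_exp.2 (sum_geometric_two_le n))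
  -- the "good partial section" predicate
  set Good : ℕ → (F →ₗ.[K] E) → Prop := fun n q =>
    (∀ y : q.domain, T (q y) = y) ∧ ∀ y : q.domain, ‖q y‖ ≤ C * P n * ‖(y : F)‖
    with hGood_def
  have good0 : Good 0 ⟨⊥, 0⟩ := by
    have happ : ∀ y : ((⟨⊥, 0⟩ : F →ₗ.[K] E)).domain,
        (⟨⊥, 0⟩ : F →ₗ.[K] E) y = 0 := fun y => rfl
    have hcoe : ∀ y : ((⟨⊥, 0⟩ : F →ₗ.[K] E)).domain, (y : F) = 0 := fun y =>
      (Submodule.mem_bot K).1 y.2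
    constructor
    · intro y
      rw [happ y, hcoe y, map_zero]
    · intro y
      rw [happ y, norm_zero]
      positivity
  -- one extension step
  have step : ∀ n (q : F →ₗ.[K] E), Good n q →
      ∃ q', q ≤ q' ∧ Good (n + 1) q' ∧ u n ∈ closure (q'.domain : Set F) := by
    intro n q hq
    have hPmul : C * P n ≤ C * P (n + 1) := by
      rw [hPsucc n, ← mul_assoc]
      exact le_mul_of_one_le_right (by positivity) (hr1 n)
    by_cases hmem : u n ∈ closure (q.domain : Set F)
    · refine ⟨q, le_refl q, ⟨hq.1, fun y => (hq.2 y).trans ?_⟩, hmem⟩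
      exact mul_le_mul_of_nonneg_right hPmul (norm_nonneg _)
    · have hSne : ((q.domain : Set F)).Nonempty := ⟨0, Submodule.zero_mem _⟩
      set d : ℝ := infDist (u n) (q.domain : Set F) with hd_def
      have hd0 : 0 < d := by
        rcases lt_or_eq_of_le (infDist_nonneg (s := (q.domain : Set F)) (x := u n)) with h | h
        · exact h
        · exact absurd ((mem_closure_iff_infDist_zero hSne).2 h.symm) hmem
      have hrn1 : (1 : ℝ) < r n := by
        simp only [hr_def, lt_add_iff_pos_right]
        positivity
      have hlt : infDist (u n) (q.domain : Set F) < r n * d := by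
        rw [← hd_def]
        nlinarith
      obtain ⟨p, hpS, hp⟩ := (infDist_lt_iff hSne).1 hlt
      set e : F := u n - p with he_def
      have he_norm : ‖e‖ < r n * d := by
        rw [he_def, ← dist_eq_norm]
        exact hp
      have hdist : ∀ z ∈ q.domain, d ≤ ‖u n - z‖ := fun z hz => by
        rw [← dist_eq_norm]
        exact infDist_le_dist_of_mem hz
      -- key orthogonality bounds
      have key : ∀ z ∈ q.domain, ∀ a : K,
          ‖z‖ ≤ r n * ‖z + a • e‖ ∧ ‖a • e‖ ≤ r n * ‖z + a • e‖ := by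
        intro z hz a
        rcases eq_or_ne a 0 with rfl | ha
        · simp only [zero_smul, add_zero, norm_zero]
          constructor
          · nlinarith [norm_nonneg z]
          · positivity
        · have h1 : d ≤ ‖a⁻¹ • z + e‖ := by
            have : a⁻¹ • z + e = u n - (p - a⁻¹ • z) := by
              rw [he_def]; abel
            rw [this]
            exact hdist _ (Submodule.sub_mem _ hpS (Submodule.smul_mem _ _ hz))
          have h2 : |‖a‖| = ‖a‖ := abs_of_nonneg (norm_nonneg a)
          have h3 : ‖z + a • e‖ = ‖a‖ * ‖a⁻¹ • z + e‖ := by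
            rw [← norm_smul, smul_add, smul_smul, mul_inv_cancel₀ ha, one_smul]
          have ha0 : 0 < ‖a‖ := norm_pos_iff.2 ha
          have h4 : ‖a‖ * d ≤ ‖z + a • e‖ := by
            rw [h3]
            exact mul_le_mul_of_nonneg_left h1 (le_of_lt ha0)
          constructor
          · -- ultrametric peel
            have h5 : ‖z‖ ≤ max ‖z + a • e‖ ‖a • e‖ := by
              have := IsUltrametricDist.norm_add_le_max (z + a • e) (-(a • e))
              simpa using this
            have h6 : ‖a • e‖ ≤ r n * ‖z + a • e‖ := by
              rw [norm_smul]
              calc ‖a‖ * ‖e‖ ≤ ‖a‖ * (r n * d) :=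
                    mul_le_mul_of_nonneg_left he_norm.le (norm_nonneg a)
                _ = r n * (‖a‖ * d) := by ring
                _ ≤ r n * ‖z + a • e‖ :=
                    mul_le_mul_of_nonneg_left h4 (by positivity)
            rcases le_max_iff.1 h5 with h | h
            · calc ‖z‖ ≤ ‖z + a • e‖ := h
                _ ≤ r n * ‖z + a • e‖ := le_mul_of_one_le_left (norm_nonneg _) (hr1 n)
            · exact h.trans h6
          · rw [norm_smul]
            calc ‖a‖ * ‖e‖ ≤ ‖a‖ * (r n * d) :=
                  mul_le_mul_of_nonneg_left he_norm.le (norm_nonneg a)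
              _ = r n * (‖a‖ * d) := by ring
              _ ≤ r n * ‖z + a • e‖ := mul_le_mul_of_nonneg_left h4 (by positivity)
      have he_not : e ∉ q.domain := by
        intro h
        exact hmem (subset_closure (by
          have : u n = e + p := by rw [he_def]; abel
          rw [this]
          exact Submodule.add_mem _ h hpS))
      obtain ⟨x, hxT, hxn⟩ := hC e
      refine ⟨q.supSpanSingleton e x he_not, LinearPMap.left_le_sup _ _ _, ⟨?_, ?_⟩, ?_⟩
      · rintro ⟨y', hy'⟩
        rw [LinearPMap.domain_supSpanSingleton] at hy'
        obtain ⟨z, hz, w, hw, rfl⟩ := Submodule.mem_sup.1 hy'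
        obtain ⟨a, rfl⟩ := Submodule.mem_span_singleton.1 hw
        rw [LinearPMap.supSpanSingleton_apply_mk q e x he_not z hz a]
        rw [map_add, hq.1 ⟨z, hz⟩, map_smul, hxT]
        rfl
      · rintro ⟨y', hy'⟩
        rw [LinearPMap.domain_supSpanSingleton] at hy'
        obtain ⟨z, hz, w, hw, rfl⟩ := Submodule.mem_sup.1 hy'
        obtain ⟨a, rfl⟩ := Submodule.mem_span_singleton.1 hw
        rw [LinearPMap.supSpanSingleton_apply_mk q e x he_not z hz a]
        have hkey := key z hz a
        have h1 : ‖q ⟨z, hz⟩ + a • x‖ ≤ max ‖q ⟨z, hz⟩‖ ‖a • x‖ :=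
          IsUltrametricDist.norm_add_le_max _ _
        have h2 : ‖q ⟨z, hz⟩‖ ≤ C * P (n + 1) * ‖z + a • e‖ := by
          calc ‖q ⟨z, hz⟩‖ ≤ C * P n * ‖z‖ := hq.2 ⟨z, hz⟩
            _ ≤ C * P n * (r n * ‖z + a • e‖) :=
              mul_le_mul_of_nonneg_left hkey.1 (by positivity)
            _ = C * P (n + 1) * ‖z + a • e‖ := by rw [hPsucc]; ring
        have h3 : ‖a • x‖ ≤ C * P (n + 1) * ‖z + a • e‖ := by
          rw [norm_smul]
          calc ‖a‖ * ‖x‖ ≤ ‖a‖ * (C * ‖e‖) := mul_le_mul_of_nonneg_left hxn (norm_nonneg a)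
            _ = C * ‖a • e‖ := by rw [norm_smul]; ring
            _ ≤ C * (r n * ‖z + a • e‖) := mul_le_mul_of_nonneg_left hkey.2 hC0.le
            _ ≤ C * P (n + 1) * ‖z + a • e‖ := by
                rw [hPsucc]
                have hrP : r n ≤ P n * r n :=
                  le_mul_of_one_le_left (le_trans zero_le_one (hr1 n)) (hP1 n)
                calc C * (r n * ‖z + a • e‖) = C * r n * ‖z + a • e‖ := by ring
                  _ ≤ C * (P n * r n) * ‖z + a • e‖ :=
                    mul_le_mul_of_nonneg_right
                      (mul_le_mul_of_nonneg_left hrP hC0.le) (norm_nonneg _)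
        exact h1.trans (max_le h2 h3)
      · apply subset_closure
        show u n ∈ ((q.supSpanSingleton e x he_not).domain : Set F)
        rw [LinearPMap.domain_supSpanSingleton]
        have : u n = p + e := by rw [he_def]; abel
        rw [this]
        exact Submodule.add_mem _ (Submodule.mem_sup_left hpS)
          (Submodule.mem_sup_right (Submodule.mem_span_singleton_self e))
  -- the recursion
  let Q : ∀ n : ℕ, {q : F →ₗ.[K] E // Good n q} := fun n =>
    Nat.rec (motive := fun n => {q : F →ₗ.[K] E // Good n q}) ⟨⟨⊥, 0⟩, good0⟩
      (fun n ih => ⟨(step n ih.1 ih.2).choose, (step n ih.1 ih.2).choose_spec.2.1⟩) n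
  have hQstep : ∀ n, (Q n).1 ≤ (Q (n + 1)).1 ∧
      u n ∈ closure (((Q (n + 1)).1.domain : Set F)) := fun n =>
    ⟨(step n (Q n).1 (Q n).2).choose_spec.1, (step n (Q n).1 (Q n).2).choose_spec.2.2⟩
  have hmono : Monotone fun n => (Q n).1 := monotone_nat_of_le_succ fun n => (hQstep n).1
  have hdir : DirectedOn (· ≤ ·) (Set.range fun n => (Q n).1) :=
    directedOn_range.mpr hmono.directed_le
  set slim : F →ₗ.[K] E := LinearPMap.sSup _ hdir with hslim_def
  have hdomle : ∀ n, (Q n).1.domain ≤ slim.domain := fun n =>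
    (LinearPMap.le_sSup hdir ⟨n, rfl⟩).1
  -- membership in the limit domain comes from a stage
  have hmem_stage : ∀ y : F, y ∈ slim.domain → ∃ n, y ∈ (Q n).1.domain := by
    intro y hy
    have : y ∈ sSup (LinearPMap.domain '' Set.range fun n => (Q n).1) := hy
    have hne : (LinearPMap.domain '' Set.range fun n => (Q n).1).Nonempty :=
      ⟨(Q 0).1.domain, ⟨(Q 0).1, ⟨0, rfl⟩, rfl⟩⟩
    have hdir2 : DirectedOn (· ≤ ·) (LinearPMap.domain '' Set.range fun n => (Q n).1) :=
      directedOn_image.2 (hdir.mono fun _ _ h => LinearPMap.domain_mono.monotone h)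
    obtain ⟨p, hp, hyp⟩ := (Submodule.mem_sSup_of_directed hne hdir2).1 this
    obtain ⟨q', ⟨n, rfl⟩, rfl⟩ := hp
    exact ⟨n, hyp⟩
  have hstage_val : ∀ (n : ℕ) (y : slim.domain) (hy : (y : F) ∈ (Q n).1.domain),
      slim y = (Q n).1 ⟨(y : F), hy⟩ := by
    intro n y hy
    have h1 := LinearPMap.sSup_apply hdir (show (Q n).1 ∈ _ from ⟨n, rfl⟩) ⟨(y : F), hy⟩
    rw [← h1]
  have hkey : ∀ y : slim.domain, T (slim y) = (y : F) ∧
      ‖slim y‖ ≤ C * Real.exp 2 * ‖(y : F)‖ := by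
    intro y
    obtain ⟨n, hn⟩ := hmem_stage _ y.2
    rw [hstage_val n y hn]
    refine ⟨(Q n).2.1 _, ((Q n).2.2 _).trans ?_⟩
    exact mul_le_mul_of_nonneg_right
      (mul_le_mul_of_nonneg_left (hPB n) hC0.le) (norm_nonneg _)
  -- density of the limit domain
  have hDd : Dense (slim.domain : Set F) := by
    have h1 : ∀ n, u n ∈ closure (slim.domain : Set F) := fun n =>
      closure_mono (show ((Q (n + 1)).1.domain : Set F) ⊆ slim.domain from hdomle (n + 1))
        (hQstep n).2
    have h2 : Submodule.span K (Set.range u) ≤ slim.domain.topologicalClosure := by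
      rw [Submodule.span_le]
      rintro _ ⟨n, rfl⟩
      exact h1 n
    have h3 : Dense (slim.domain.topologicalClosure : Set F) := hudense.mono h2
    simpa [Submodule.topologicalClosure_coe, dense_closure] using h3
  -- build the continuous map on the dense domain and extend
  set s₁ : slim.domain →L[K] E :=
    LinearMap.mkContinuous slim.toFun (C * Real.exp 2) (fun y => (hkey y).2) with hs₁_def
  have hui : IsUniformInducing ((slim.domain).subtypeL : slim.domain →L[K] F) :=
    isometry_subtype_coe.isUniformInducing
  have hdr : DenseRange ((slim.domain).subtypeL : slim.domain →L[K] F) := by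
    have : Set.range ((slim.domain).subtypeL : slim.domain →L[K] F)
        = (slim.domain : Set F) := Subtype.range_coe
    rw [DenseRange, this]
    exact hDd
  refine ⟨s₁.extend (slim.domain).subtypeL, ?_⟩
  have hfin : ∀ d : slim.domain,
      T (s₁.extend (slim.domain).subtypeL ((slim.domain).subtypeL d)) = (d : F) := by
    intro d
    rw [ContinuousLinearMap.extend_eq (h_dense := hdr) (h_e := hui)]
    exact (hkey d).1
  have heq : (T.comp (s₁.extend (slim.domain).subtypeL) : F → F) = id := by
    refine hdr.equalizer (T.comp (s₁.extend (slim.domain).subtypeL)).continuous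
      continuous_id ?_
    funext d
    simpa using hfin d
  intro y
  have := congrFun heq y
  simpa using this

set_option maxHeartbeats 2000000 in
set_option synthInstance.maxHeartbeats 400000 in
/-- Key structural lemma: the range of `f` admits a finite-dimensional *closed*
complementary subspace (in the weak sense that together they span). -/
theorem exists_closed_complement {V V' : Type*}
    [NormedAddCommGroup V] [NormedSpace K V] [CompleteSpace V]
    [NormedAddCommGroup V'] [NormedSpace K V'] [CompleteSpace V']
    (f : V →L[K] V')
    (hcoker : FiniteDimensional K (V' ⧸ LinearMap.range (f : V →ₗ[K] V'))) :
    ∃ W : Submodule K V', FiniteDimensional K ↥W ∧ IsClosed (W : Set V') ∧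
      LinearMap.range (f : V →ₗ[K] V') ⊔ W = ⊤ := by
  set R : Submodule K V' := LinearMap.range (f : V →ₗ[K] V') with hR_def
  by_cases htriv : Subsingleton (V' ⧸ R)
  · refine ⟨⊥, inferInstance, ?_, ?_⟩
    · rw [Submodule.bot_coe]
      exact isClosed_singleton
    · rw [sup_bot_eq]
      exact Submodule.Quotient.subsingleton_iff.1 htriv
  have hQnt : Nontrivial (V' ⧸ R) := not_subsingleton_iff_nontrivial.1 htriv
  have hVnt : Nontrivial V' := by
    by_contra h
    have : Subsingleton V' := not_nontrivial_iff_subsingleton.1 h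
    exact htriv ((Submodule.mkQ_surjective R).subsingleton)
  clear htriv
  -- The operator algebra closure of the scalars
  set A : Subalgebra K (V' →L[K] V') := (⊥ : Subalgebra K (V' →L[K] V')).topologicalClosure
    with hA_def
  have hA_closed : IsClosed (A : Set (V' →L[K] V')) :=
    Subalgebra.isClosed_topologicalClosure _
  have hA_mem_iff : ∀ γ : V' →L[K] V',
      γ ∈ A ↔ γ ∈ closure (Set.range (algebraMap K (V' →L[K] V'))) := by
    intro γ
    rw [hA_def, ← SetLike.mem_coe, Subalgebra.topologicalClosure_coe, Algebra.coe_bot]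
  have halg_mem : ∀ t : K, algebraMap K (V' →L[K] V') t ∈ A := fun t =>
    Subalgebra.le_topologicalClosure _ (by rw [Algebra.mem_bot]; exact ⟨t, rfl⟩)
  have hseq : ∀ γ : V' →L[K] V', γ ∈ A → ∃ t : ℕ → K,
      Tendsto (fun k => algebraMap K (V' →L[K] V') (t k)) atTop (nhds γ) := by
    intro γ hγ
    obtain ⟨v, hvm, hvl⟩ := mem_closure_iff_seq_limit.1 ((hA_mem_iff γ).1 hγ)
    choose t ht using hvm
    refine ⟨t, ?_⟩
    have : (fun k => algebraMap K (V' →L[K] V') (t k)) = v := funext ht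
    rw [this]
    exact hvl
  -- algebraMap is an isometry onto scalar multiples of the identity
  have halg_apply : ∀ (t : K) (v : V'), algebraMap K (V' →L[K] V') t v = t • v := by
    intro t v
    rw [Algebra.algebraMap_eq_smul_one]
    simp
  have halg_norm : ∀ t : K, ‖algebraMap K (V' →L[K] V') t‖ = ‖t‖ := by
    intro t
    rw [Algebra.algebraMap_eq_smul_one, norm_smul, ContinuousLinearMap.one_def,
      ContinuousLinearMap.norm_id, mul_one]
  have halg_dist : ∀ a b : K,
      dist (algebraMap K (V' →L[K] V') a) (algebraMap K (V' →L[K] V') b) = dist a b := by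
    intro a b
    rw [dist_eq_norm, dist_eq_norm, ← map_sub, halg_norm]
  -- members of `A` preserve the range of `f`
  have hpres : ∀ γ : V' →L[K] V', γ ∈ A → ∀ y ∈ R, γ y ∈ R := by
    intro γ hγ y hy
    obtain ⟨x, rfl⟩ := hy
    show γ (f x) ∈ R
    obtain ⟨t, ht⟩ := hseq γ hγ
    have htC : CauchySeq t := by
      have h1 : CauchySeq fun k => algebraMap K (V' →L[K] V') (t k) := ht.cauchySeq
      rw [Metric.cauchySeq_iff] at h1 ⊢
      intro ε hε
      obtain ⟨N, hN⟩ := h1 ε hε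
      exact ⟨N, fun m hm n hn => by rw [← halg_dist]; exact hN m hm n hn⟩
    have hsx : CauchySeq fun k => t k • x := by
      have : (fun k => t k • x)
          = (fun c : K => (ContinuousLinearMap.id K K).smulRight x c) ∘ t := by
        funext k
        simp
      rw [this]
      exact htC.map ((ContinuousLinearMap.id K K).smulRight x).uniformContinuous
    obtain ⟨xlim, hxlim⟩ := cauchySeq_tendsto_of_complete hsx
    have h2 : Tendsto (fun k => f (t k • x)) atTop (nhds (f xlim)) :=
      (f.continuous.tendsto xlim).comp hxlim
    have h3 : Tendsto (fun k => f (t k • x)) atTop (nhds (γ (f x))) := by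
      have heq : (fun k => f (t k • x))
          = fun k => algebraMap K (V' →L[K] V') (t k) (f x) := by
        funext k
        rw [halg_apply, map_smul]
      rw [heq]
      exact ((ContinuousLinearMap.apply K V' (f x)).continuous.tendsto γ).comp ht
    have : γ (f x) = f xlim := tendsto_nhds_unique h3 h2
    rw [this]
    exact ⟨xlim, rfl⟩
  -- nonzero members of `A` are invertible in `A`
  have hinv : ∀ γ : V' →L[K] V', γ ∈ A → γ ≠ 0 →
      ∃ δ ∈ A, γ * δ = 1 ∧ δ * γ = 1 := by
    intro γ hγ hγ0
    obtain ⟨t, ht⟩ := hseq γ hγ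
    have hc : 0 < ‖γ‖ := norm_pos_iff.2 hγ0
    have hnorm_t : Tendsto (fun k => ‖t k‖) atTop (nhds ‖γ‖) := by
      have h1 : Tendsto (fun k => ‖algebraMap K (V' →L[K] V') (t k)‖) atTop (nhds ‖γ‖) :=
        (continuous_norm.tendsto γ).comp ht
      simpa [halg_norm] using h1
    obtain ⟨N, hN⟩ := eventually_atTop.1 (hnorm_t.eventually
      (eventually_gt_nhds (show ‖γ‖ / 2 < ‖γ‖ by linarith)))
    set s : ℕ → K := fun k => t (k + N) with hs_def
    have hs_low : ∀ k, ‖γ‖ / 2 < ‖s k‖ := fun k => hN (k + N) (Nat.le_add_left _ _)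
    have hs_ne : ∀ k, s k ≠ 0 := fun k => by
      intro h
      have := hs_low k
      rw [h, norm_zero] at this
      linarith
    have hst : Tendsto (fun k => algebraMap K (V' →L[K] V') (s k)) atTop (nhds γ) :=
      ht.comp (tendsto_add_atTop_nat N)
    have hsC : CauchySeq s := by
      have h1 : CauchySeq fun k => algebraMap K (V' →L[K] V') (s k) := hst.cauchySeq
      rw [Metric.cauchySeq_iff] at h1 ⊢
      intro ε hε
      obtain ⟨M, hM⟩ := h1 ε hε
      exact ⟨M, fun m hm n hn => by rw [← halg_dist]; exact hM m hm n hn⟩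
    have hinvC : CauchySeq fun k => algebraMap K (V' →L[K] V') (s k)⁻¹ := by
      rw [Metric.cauchySeq_iff] at hsC ⊢
      intro ε hε
      obtain ⟨M, hM⟩ := hsC (ε * (‖γ‖ / 2 * (‖γ‖ / 2))) (by positivity)
      refine ⟨M, fun m hm n hn => ?_⟩
      have h1 := hM m hm n hn
      rw [halg_dist, dist_eq_norm] at *
      have key : (s m)⁻¹ - (s n)⁻¹ = (s n - s m) * ((s m)⁻¹ * (s n)⁻¹) := by
        field_simp [hs_ne m, hs_ne n]
        try ring
      rw [key, norm_mul, norm_mul, norm_inv, norm_inv]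
      have h2 : ‖s n - s m‖ < ε * (‖γ‖ / 2 * (‖γ‖ / 2)) := by
        rw [norm_sub_rev]
        exact h1
      have h3 : ‖s m‖⁻¹ ≤ (‖γ‖ / 2)⁻¹ :=
        inv_anti₀ (by positivity) (hs_low m).le
      have h4 : ‖s n‖⁻¹ ≤ (‖γ‖ / 2)⁻¹ :=
        inv_anti₀ (by positivity) (hs_low n).le
      calc ‖s n - s m‖ * (‖s m‖⁻¹ * ‖s n‖⁻¹)
          ≤ ‖s n - s m‖ * ((‖γ‖ / 2)⁻¹ * (‖γ‖ / 2)⁻¹) := by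
            refine mul_le_mul_of_nonneg_left (mul_le_mul h3 h4 (by positivity) (by positivity))
              (norm_nonneg _)
        _ < ε * (‖γ‖ / 2 * (‖γ‖ / 2)) * ((‖γ‖ / 2)⁻¹ * (‖γ‖ / 2)⁻¹) := by
            refine mul_lt_mul_of_pos_right h2 (by positivity)
        _ = ε := by field_simp
    obtain ⟨δ, hδ⟩ := cauchySeq_tendsto_of_complete hinvC
    have hδA : δ ∈ A := hA_closed.mem_of_tendsto hδ
      (Filter.Eventually.of_forall fun k => (hA_mem_iff _).2
        (subset_closure ⟨(s k)⁻¹, rfl⟩))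
    have hmul1 : Tendsto (fun k => algebraMap K (V' →L[K] V') (s k)
        * algebraMap K (V' →L[K] V') (s k)⁻¹) atTop (nhds (γ * δ)) := hst.mul hδ
    have hmul2 : Tendsto (fun k => algebraMap K (V' →L[K] V') (s k)⁻¹
        * algebraMap K (V' →L[K] V') (s k)) atTop (nhds (δ * γ)) := hδ.mul hst
    have hone : ∀ k, algebraMap K (V' →L[K] V') (s k)
        * algebraMap K (V' →L[K] V') (s k)⁻¹ = 1 := fun k => by
      rw [← map_mul, mul_inv_cancel₀ (hs_ne k), map_one]
    have hone' : ∀ k, algebraMap K (V' →L[K] V') (s k)⁻¹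
        * algebraMap K (V' →L[K] V') (s k) = 1 := fun k => by
      rw [← map_mul, inv_mul_cancel₀ (hs_ne k), map_one]
    have hone1 : Tendsto (fun _ : ℕ => (1 : V' →L[K] V')) atTop (nhds (γ * δ)) := by
      simp only [hone] at hmul1
      exact hmul1
    have hone2 : Tendsto (fun _ : ℕ => (1 : V' →L[K] V')) atTop (nhds (δ * γ)) := by
      simp only [hone'] at hmul2
      exact hmul2
    exact ⟨δ, hδA, (tendsto_nhds_unique tendsto_const_nhds hone1).symm,
      (tendsto_nhds_unique tendsto_const_nhds hone2).symm⟩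
  -- `A` is a (complete, nontrivially normed) field
  have h1ne0 : (1 : V' →L[K] V') ≠ 0 := by
    intro h
    obtain ⟨v, hv⟩ := exists_ne (0 : V')
    have h2 : (1 : V' →L[K] V') v = (0 : V' →L[K] V') v := by rw [h]
    simp only [ContinuousLinearMap.one_apply, ContinuousLinearMap.zero_apply] at h2
    exact hv h2
  have hAcomm : ∀ a b : V' →L[K] V', a ∈ A → b ∈ A → a * b = b * a := by
    intro a b ha hb
    obtain ⟨s, hs⟩ := hseq a ha
    obtain ⟨t, ht⟩ := hseq b hb
    have h1 : Tendsto (fun k => algebraMap K (V' →L[K] V') (s k)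
        * algebraMap K (V' →L[K] V') (t k)) atTop (nhds (a * b)) := hs.mul ht
    have h2 : Tendsto (fun k => algebraMap K (V' →L[K] V') (s k)
        * algebraMap K (V' →L[K] V') (t k)) atTop (nhds (b * a)) := by
      have heq : ∀ k, algebraMap K (V' →L[K] V') (s k) * algebraMap K (V' →L[K] V') (t k)
          = algebraMap K (V' →L[K] V') (t k) * algebraMap K (V' →L[K] V') (s k) := fun k => by
        rw [← map_mul, ← map_mul, mul_comm]
      simp only [heq]
      exact ht.mul hs
    exact tendsto_nhds_unique h1 h2
  have hIsField : IsField ↥A := by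
    refine ⟨⟨0, 1, ?_⟩, fun a b => Subtype.ext (hAcomm a.1 b.1 a.2 b.2), ?_⟩
    · intro h
      exact h1ne0 (congrArg Subtype.val h).symm
    · intro a ha
      have hcoe : (a : V' →L[K] V') ≠ 0 := fun h => ha (Subtype.ext h)
      obtain ⟨δ, hδA, hγδ, _⟩ := hinv a.1 a.2 hcoe
      exact ⟨⟨δ, hδA⟩, Subtype.ext hγδ⟩
  letI instFieldA : Field ↥A := hIsField.toField
  have hnormmul : ∀ a b : V' →L[K] V', a ∈ A → b ∈ A → ‖a * b‖ = ‖a‖ * ‖b‖ := by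
    intro a b ha hb
    obtain ⟨s, hs⟩ := hseq a ha
    obtain ⟨t, ht⟩ := hseq b hb
    have h1 : Tendsto (fun k => algebraMap K (V' →L[K] V') (s k)
        * algebraMap K (V' →L[K] V') (t k)) atTop (nhds (a * b)) := hs.mul ht
    have h2 : Tendsto (fun k => ‖algebraMap K (V' →L[K] V') (s k)
        * algebraMap K (V' →L[K] V') (t k)‖) atTop (nhds ‖a * b‖) :=
      (continuous_norm.tendsto _).comp h1
    have h3 : Tendsto (fun k => ‖algebraMap K (V' →L[K] V') (s k)
        * algebraMap K (V' →L[K] V') (t k)‖) atTop (nhds (‖a‖ * ‖b‖)) := by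
      have heq : ∀ k, ‖algebraMap K (V' →L[K] V') (s k)
          * algebraMap K (V' →L[K] V') (t k)‖
          = ‖algebraMap K (V' →L[K] V') (s k)‖ * ‖algebraMap K (V' →L[K] V') (t k)‖ := by
        intro k
        rw [← map_mul, halg_norm, halg_norm, halg_norm, norm_mul]
      simp only [heq]
      exact ((continuous_norm.tendsto _).comp hs).mul ((continuous_norm.tendsto _).comp ht)
    exact tendsto_nhds_unique h2 h3
  letI instNFA : NormedField ↥A :=
    { instFieldA, (inferInstance : NormedRing ↥A) with
      norm_mul := fun a b => hnormmul a.1 b.1 a.2 b.2 }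
  letI instNNFA : NontriviallyNormedField ↥A :=
    { instNFA with
      non_trivial := by
        obtain ⟨k, hk⟩ := NormedField.exists_one_lt_norm K
        refine ⟨⟨algebraMap K (V' →L[K] V') k, halg_mem k⟩, ?_⟩
        show (1 : ℝ) < ‖algebraMap K (V' →L[K] V') k‖
        rw [halg_norm]
        exact hk }
  letI instCSA : CompleteSpace ↥A := hA_closed.completeSpace_coe
  letI instCSMA : ContinuousSMul ↥A V' :=
    ⟨(isBoundedBilinearMap_apply.continuous).comp
      ((continuous_subtype_val.comp continuous_fst).prodMk continuous_snd)⟩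
  letI instTowerA : IsScalarTower K ↥A V' := ⟨fun k a v => by
    show ((k • a : ↥A) : V' →L[K] V') v = k • ((a : V' →L[K] V') v)
    rw [Subalgebra.coe_smul]
    simp⟩
  letI instNSA : NormedSpace ↥A V' :=
    ⟨fun a v => by
      show ‖(a : V' →L[K] V') v‖ ≤ ‖a‖ * ‖v‖
      exact (a : V' →L[K] V').le_opNorm v⟩
  -- `A` is finite-dimensional over `K` since it acts faithfully on the cokernel
  have hcm : ∀ γ : V' →L[K] V', γ ∈ A → R ≤ R.comap (γ : V' →ₗ[K] V') :=
    fun γ hγ y hy => hpres γ hγ y hy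
  set Ψ : ↥A →ₗ[K] ((V' ⧸ R) →ₗ[K] (V' ⧸ R)) :=
    { toFun := fun γ => R.mapQ R (γ.1 : V' →ₗ[K] V') (hcm γ.1 γ.2)
      map_add' := by
        intro γ δ
        refine Submodule.linearMap_qext _ (LinearMap.ext fun v => ?_)
        simp [Submodule.mapQ_apply]
      map_smul' := by
        intro c γ
        refine Submodule.linearMap_qext _ (LinearMap.ext fun v => ?_)
        simp [Submodule.mapQ_apply] } with hΨ_def
  have hΨinj : Function.Injective Ψ := by
    rw [← LinearMap.ker_eq_bot, LinearMap.ker_eq_bot']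
    intro γ hγ0
    by_contra hne
    have hcoe : (γ : V' →L[K] V') ≠ 0 := fun h => hne (Subtype.ext h)
    obtain ⟨δ, hδA, _, hδγ⟩ := hinv γ.1 γ.2 hcoe
    have hRtop : R = ⊤ := by
      rw [eq_top_iff]
      intro v _
      have h1 : γ.1 v ∈ R := by
        have h2 : Ψ γ (R.mkQ v) = 0 := by rw [hγ0]; rfl
        rw [hΨ_def] at h2
        simp only [LinearMap.coe_mk, AddHom.coe_mk, Submodule.mkQ_apply,
          Submodule.mapQ_apply] at h2
        rwa [Submodule.Quotient.mk_eq_zero] at h2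
      have h2 : δ (γ.1 v) ∈ R := hpres δ hδA _ h1
      have h3 : δ (γ.1 v) = v := by
        calc δ (γ.1 v) = (δ * γ.1) v := rfl
          _ = (1 : V' →L[K] V') v := by rw [hδγ]
          _ = v := rfl
      rwa [h3] at h2
    exact absurd (Submodule.Quotient.subsingleton_iff.2 hRtop)
      (not_subsingleton_iff_nontrivial.2 hQnt)
  haveI hFDA : FiniteDimensional K ↥A := FiniteDimensional.of_injective Ψ hΨinj
  -- the complement: the `A`-span of lifts of a spanning set of the cokernel
  obtain ⟨sQ, hsQ⟩ := Module.finite_def.1 hcoker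
  have hmkQ : Function.Surjective (R.mkQ) := Submodule.mkQ_surjective R
  set lift : (V' ⧸ R) → V' := Function.surjInv hmkQ with hlift_def
  set Lset : Set V' := lift '' ↑sQ with hLset_def
  have hLfin : Lset.Finite := Set.Finite.image _ sQ.finite_toSet
  set WA : Submodule ↥A V' := Submodule.span ↥A Lset with hWA_def
  haveI hWAfd : FiniteDimensional ↥A ↥WA := FiniteDimensional.span_of_finite ↥A hLfin
  haveI htower : IsScalarTower K ↥A ↥WA := WA.isScalarTower
  haveI hWAfdK : FiniteDimensional K ↥WA := Module.Finite.trans ↥A ↥WA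
  refine ⟨WA.restrictScalars K, ?_, ?_, ?_⟩
  · exact hWAfdK
  · show IsClosed ((WA.restrictScalars K : Submodule K V') : Set V')
    rw [Submodule.coe_restrictScalars]
    exact WA.closed_of_finiteDimensional
  · rw [eq_top_iff]
    intro v _
    have h1 : R.mkQ v ∈ Submodule.span K (↑sQ : Set (V' ⧸ R)) := by
      rw [hsQ]
      exact Submodule.mem_top
    have h2 : (↑sQ : Set (V' ⧸ R)) ⊆ ⇑(R.mkQ) '' Lset := by
      intro q hq
      exact ⟨lift q, ⟨q, hq, rfl⟩, Function.surjInv_eq hmkQ q⟩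
    have h3 : R.mkQ v ∈ Submodule.span K (⇑(R.mkQ) '' Lset) :=
      Submodule.span_mono h2 h1
    rw [Submodule.span_image] at h3
    obtain ⟨z, hz, hzv⟩ := Submodule.mem_map.1 h3
    have h4 : v - z ∈ R := by
      have h5 : z - v ∈ R := (Submodule.Quotient.eq R).1 (by
        simpa [Submodule.mkQ_apply] using hzv)
      simpa using R.neg_mem h5
    have h5 : z ∈ WA.restrictScalars K := by
      have hle : Submodule.span K Lset ≤ WA.restrictScalars K :=
        Submodule.span_le.2 fun w hw => Submodule.subset_span hw
      exact hle hz
    have h6 : v = (v - z) + z := by abel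
    rw [h6]
    exact Submodule.add_mem _ (Submodule.mem_sup_left h4) (Submodule.mem_sup_right h5)

instance prodUltrametric {X Y : Type*} [PseudoMetricSpace X] [PseudoMetricSpace Y]
    [IsUltrametricDist X] [IsUltrametricDist Y] : IsUltrametricDist (X × Y) := by
  constructor
  intro x y z
  rw [Prod.dist_eq, Prod.dist_eq, Prod.dist_eq]
  refine max_le ?_ ?_
  · exact (IsUltrametricDist.dist_triangle_max x.1 y.1 z.1).trans
      (max_le_max (le_max_left _ _) (le_max_left _ _))
  · exact (IsUltrametricDist.dist_triangle_max x.2 y.2 z.2).trans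
      (max_le_max (le_max_right _ _) (le_max_right _ _))

end ApproxSection

/-- If `f : V → V'` is a continuous linear map of separable Banach
spaces over a nonarchimedean field with finite-dimensional cokernel, then there is a
continuous linear `g : V' → V` with `f ∘ g - id` of finite rank. -/
theorem exists_approximate_section
    {K : Type*} [NontriviallyNormedField K] [IsUltrametricDist K]
    {V V' : Type*} [NormedAddCommGroup V] [NormedSpace K V] [CompleteSpace V]
    [IsUltrametricDist V]
    [NormedAddCommGroup V'] [NormedSpace K V'] [CompleteSpace V'] [IsUltrametricDist V']
    (hsepV : CountablyGenerated K V) (hsepV' : CountablyGenerated K V')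
    (f : V →L[K] V')
    (hcoker : FiniteDimensional K (V' ⧸ LinearMap.range (f : V →ₗ[K] V'))) :
    ∃ g : V' →L[K] V,
      FiniteDimensional K
        ↥(LinearMap.range ((f.comp g - ContinuousLinearMap.id K V') : V' →ₗ[K] V')) := by
  obtain ⟨W, hWfd, hWclosed, hWsup⟩ := ApproxSection.exists_closed_complement f hcoker
  haveI : CompleteSpace ↥W := hWclosed.completeSpace_coe
  haveI : FiniteDimensional K ↥W := hWfd
  set S : (V × ↥W) →L[K] V' :=
    f.comp (ContinuousLinearMap.fst K V ↥W)
      + W.subtypeL.comp (ContinuousLinearMap.snd K V ↥W) with hS_def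
  have hSapp : ∀ p : V × ↥W, S p = f p.1 + (p.2 : V') := fun p => rfl
  have hSsurj : Function.Surjective S := by
    intro y
    have hy : y ∈ LinearMap.range (f : V →ₗ[K] V') ⊔ W := by
      rw [hWsup]
      exact Submodule.mem_top
    obtain ⟨a, ha, b, hb, rfl⟩ := Submodule.mem_sup.1 hy
    obtain ⟨x, rfl⟩ := ha
    exact ⟨(x, ⟨b, hb⟩), rfl⟩
  obtain ⟨σ, hσ⟩ := ApproxSection.exists_section hsepV' S hSsurj
  refine ⟨(ContinuousLinearMap.fst K V ↥W).comp σ, ?_⟩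
  have hle : LinearMap.range ((f.comp ((ContinuousLinearMap.fst K V ↥W).comp σ)
      - ContinuousLinearMap.id K V') : V' →ₗ[K] V') ≤ W := by
    rintro _ ⟨y, rfl⟩
    have h1 : f ((σ y).1) + ((σ y).2 : V') = y := hσ y
    have h2 : ((f.comp ((ContinuousLinearMap.fst K V ↥W).comp σ)
        - ContinuousLinearMap.id K V') : V' →ₗ[K] V') y = f ((σ y).1) - y := rfl
    rw [h2]
    set a : V' := f ((σ y).1) with ha_def
    set b : V' := ((σ y).2 : V') with hb_def
    have h3 : a - y = -b := by
      rw [← h1]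
      abel
    rw [h3]
    exact W.neg_mem (Submodule.coe_mem (σ y).2)
  exact Submodule.finiteDimensional_of_le hle
end

section
/- Let f : V → V' be a continuous K-linear map of separable Banach spaces over a nonarchimedean field K with finite-dimensional kernel and finite-dimensional cokernel. Then there exists a continuous K-linear map g : V' → V such that both f ∘ g − id_{V'} and g ∘ f − id_V have finite rank. -/
open Filter Topology Module Metric

universe u v

section LinearAlgebra

variable {K X Y : Type*} [Field K] [AddCommGroup X] [Module K X] [AddCommGroup Y] [Module K Y]

theorem Submodule.finrank_quotient_lt_of_lt {R R' : Submodule K Y} [FiniteDimensional K (Y ⧸ R)]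
    (h : R < R') : finrank K (Y ⧸ R') < finrank K (Y ⧸ R) := by
  obtain ⟨y, hyR', hyR⟩ := SetLike.exists_of_lt h
  have : Nontrivial (R'.map R.mkQ) :=
    ⟨⟨R.mkQ y, mem_map_of_mem hyR'⟩, 0, by simpa [Subtype.ext_iff] using hyR⟩
  rw [← (quotientQuotientEquivQuotient R R' h.le).finrank_eq]
  have := finrank_quotient_add_finrank (R'.map R.mkQ)
  have := finrank_pos (R := K) (M := R'.map R.mkQ)
  omega

open LinearMap.FiniteRangeSetoid in
theorem LinearMap.IsLeftQuasiInverse.finiteDimensional_range_comp_sub_id {f : X →ₗ[K] Y}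
    {g : Y →ₗ[K] X} (h : f.IsLeftQuasiInverse g) :
    FiniteDimensional K (f ∘ₗ g - LinearMap.id).range :=
  IsNoetherian.iff_fg.1 (equiv_iff_hasNoetherianRange.1 h)

end LinearAlgebra

section ClosedRange

variable {K : Type*} [NontriviallyNormedField K]
  {X Y : Type*} [NormedAddCommGroup X] [NormedSpace K X] [NormedAddCommGroup Y] [NormedSpace K Y]

theorem ContinuousLinearMap.closure_span_singleton_apply_subset_range [CompleteSpace X]
    (u : X →L[K] Y) (x : X) : closure ((K ∙ u x : Submodule K Y) : Set Y) ⊆ Set.range u := by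
  rcases eq_or_ne (u x) 0 with hux | hux
  · simpa [hux] using ⟨0, map_zero u⟩
  set L := (K ∙ x).topologicalClosure
  have : CompleteSpace L := (Submodule.isClosed_topologicalClosure _).completeSpace_coe
  have hbound : ∀ z ∈ L, ‖u x‖ * ‖z‖ ≤ ‖x‖ * ‖u z‖ := by
    refine fun z hz => closure_minimal (s := ((K ∙ x : Submodule K X) : Set X))
      (t := {z | ‖u x‖ * ‖z‖ ≤ ‖x‖ * ‖u z‖}) (fun z hz => ?_)
      (isClosed_le (by fun_prop) (by fun_prop)) hz
    obtain ⟨c, rfl⟩ := Submodule.mem_span_singleton.1 hz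
    simp only [Set.mem_ofPred_eq, map_smul, norm_smul]
    exact le_of_eq (by ring)
  have hanti : AntilipschitzWith (‖x‖₊ / ‖u x‖₊) (u ∘L L.subtypeL) := by
    refine (u ∘L L.subtypeL).antilipschitz_of_bound fun z => ?_
    rw [NNReal.coe_div, coe_nnnorm, coe_nnnorm, div_mul_eq_mul_div,
      le_div_iff₀ (norm_pos_iff.2 hux)]
    simpa [mul_comm] using hbound z z.2
  refine (closure_minimal ?_ (hanti.isClosed_range (u ∘L L.subtypeL).uniformContinuous)).trans ?_
  · rintro _ hy
    obtain ⟨c, rfl⟩ := Submodule.mem_span_singleton.1 hy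
    exact ⟨⟨c • x, Submodule.le_topologicalClosure _
      (Submodule.smul_mem _ c (Submodule.mem_span_singleton_self x))⟩, by simp⟩
  · rintro _ ⟨z, rfl⟩
    exact ⟨z, rfl⟩

theorem mem_closure_span_singleton_of_mem_closure_span_singleton {y d : Y}
    (hd : d ∈ closure ((K ∙ y : Submodule K Y) : Set Y)) (hd₀ : d ≠ 0) :
    y ∈ closure ((K ∙ d : Submodule K Y) : Set Y) := by
  obtain ⟨c, hc, hlim⟩ := mem_closure_iff_seq_limit.1 hd
  choose a ha using fun n => Submodule.mem_span_singleton.1 (hc n)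
  obtain rfl : (fun n => a n • y) = c := funext ha
  have hy : ‖y‖ ≠ 0 := by
    rintro hy
    simp_all [norm_eq_zero.1 hy]
  have hnorm : Tendsto (fun n => ‖a n‖) atTop (𝓝 (‖d‖ / ‖y‖)) := by
    simpa [norm_smul, hy] using hlim.norm.div_const ‖y‖
  have hpos : ‖d‖ / ‖y‖ ≠ 0 := div_ne_zero (norm_ne_zero_iff.2 hd₀) hy
  have hdist : Tendsto (fun n => ‖a n‖⁻¹ * ‖d - a n • y‖) atTop (𝓝 ((‖d‖ / ‖y‖)⁻¹ * 0)) :=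
    (hnorm.inv₀ hpos).mul
      ((tendsto_iff_norm_sub_tendsto_zero.1 hlim).congr fun n => norm_sub_rev _ _)
  refine mem_closure_of_tendsto (b := atTop) (f := fun n => (a n)⁻¹ • d) ?_
    (Eventually.of_forall fun n => Submodule.smul_mem _ _ (Submodule.mem_span_singleton_self d))
  rw [tendsto_iff_norm_sub_tendsto_zero, ← mul_zero (‖d‖ / ‖y‖)⁻¹]
  refine hdist.congr' ((hnorm.eventually_ne hpos).mono fun n hn => ?_)
  rw [← norm_inv, ← norm_smul, smul_sub, inv_smul_smul₀ (by simpa using hn)]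

theorem ContinuousLinearMap.disjoint_range_closure_span_singleton [CompleteSpace X]
    (u : X →L[K] Y) {y : Y} (hy : y ∉ u.range) :
    Disjoint u.range (K ∙ y).topologicalClosure := by
  refine Submodule.disjoint_def.2 fun d hdR hdL => by_contra fun hd₀ => hy ?_
  obtain ⟨x, rfl⟩ := hdR
  rw [← SetLike.mem_coe, Submodule.topologicalClosure_coe] at hdL
  exact u.closure_span_singleton_apply_subset_range x
    (mem_closure_span_singleton_of_mem_closure_span_singleton hdL hd₀)

theorem ContinuousLinearMap.isClosed_range_of_isClosed_range_coprod [CompleteSpace X]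
    [CompleteSpace Y] (u : X →L[K] Y) {L : Submodule K Y} (hL : IsClosed (L : Set Y))
    (hdisj : Disjoint u.range L) (h : IsClosed ((u.coprod L.subtypeL).range : Set Y)) :
    IsClosed (u.range : Set Y) := by
  set R' := (u.coprod L.subtypeL).range
  have : CompleteSpace L := hL.completeSpace_coe
  have : CompleteSpace R' := h.completeSpace_coe
  set v : X × L →L[K] R' := (u.coprod L.subtypeL).codRestrict R' fun p => ⟨p, rfl⟩
  have hv : Function.Surjective v := by
    rintro ⟨_, p, rfl⟩
    exact ⟨p, rfl⟩
  have hquot : IsQuotientMap v := (v.isOpenMap hv).isQuotientMap v.continuous hv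
  have hpre : v ⁻¹' {z | (z : Y) ∈ u.range} = Prod.snd ⁻¹' {0} := by
    ext ⟨x, l⟩
    have hux : u x ∈ u.range := ⟨x, rfl⟩
    show u x + (l : Y) ∈ u.range ↔ l = 0
    rw [Submodule.add_mem_iff_right _ hux]
    exact ⟨fun hl => by simpa using hdisj.le_bot ⟨hl, l.2⟩, fun hl => by simp [hl]⟩
  have hS : IsClosed {z : R' | (z : Y) ∈ u.range} := by
    rw [← hquot.isClosed_preimage, hpre]
    exact isClosed_singleton.preimage continuous_snd
  have hle : u.range ≤ R' := by
    rintro _ ⟨x, rfl⟩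
    exact ⟨(x, 0), by simp⟩
  convert hS.trans h using 1
  ext y
  exact ⟨fun hy => ⟨⟨y, hle hy⟩, hy, rfl⟩, by rintro ⟨z, hz, rfl⟩; exact hz⟩

theorem ContinuousLinearMap.isClosed_range_of_finiteDimensional_quotient {X : Type u}
    {Y : Type v} [NormedAddCommGroup X] [NormedSpace K X] [CompleteSpace X]
    [NormedAddCommGroup Y] [NormedSpace K Y] [CompleteSpace Y]
    (u : X →L[K] Y) [FiniteDimensional K (Y ⧸ u.range)] : IsClosed (u.range : Set Y) := by
  -- The induction enlarges the domain by a subspace of `Y`, so it runs over `Type (max u v)`.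
  suffices key : ∀ (n : ℕ) (Z : Type (max u v)) [NormedAddCommGroup Z] [NormedSpace K Z]
      [CompleteSpace Z] (w : Z →L[K] Y) [FiniteDimensional K (Y ⧸ w.range)],
      finrank K (Y ⧸ w.range) = n → IsClosed (w.range : Set Y) by
    set e : ULift.{v} X ≃L[K] X := ContinuousLinearEquiv.ulift
    have hrange : (u ∘L e.toContinuousLinearMap).range = u.range :=
      LinearMap.range_comp_of_range_eq_top _ (LinearMap.range_eq_top.2 e.surjective)
    have : FiniteDimensional K (Y ⧸ (u ∘L e.toContinuousLinearMap).range) := hrange ▸ ‹_›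
    simpa [hrange] using key _ _ (u ∘L e.toContinuousLinearMap) rfl
  intro n
  induction n using Nat.strong_induction_on with
  | _ n ih =>
    intro Z _ _ _ w _ hn
    by_cases htop : w.range = ⊤
    · simp [htop]
    obtain ⟨y, -, hy⟩ := SetLike.exists_of_lt (lt_top_iff_ne_top.2 htop)
    set L := (K ∙ y).topologicalClosure
    have hL : IsClosed (L : Set Y) := Submodule.isClosed_topologicalClosure _
    have : CompleteSpace L := hL.completeSpace_coe
    have hlt : w.range < (w.coprod L.subtypeL).range := by
      have hrange : (w.coprod L.subtypeL).range = w.range ⊔ L := by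
        simp [LinearMap.range_coprod]
      rw [hrange]
      refine lt_of_le_of_ne le_sup_left fun h => hy ?_
      rw [h]
      exact Submodule.mem_sup_right
        (Submodule.le_topologicalClosure _ (Submodule.mem_span_singleton_self y))
    have : FiniteDimensional K (Y ⧸ (w.coprod L.subtypeL).range) := Submodule.CoFG.of_le hlt.le ‹_›
    exact w.isClosed_range_of_isClosed_range_coprod hL (w.disjoint_range_closure_span_singleton hy)
      (ih _ (hn ▸ Submodule.finrank_quotient_lt_of_lt hlt) _ _ rfl)

theorem ContinuousLinearMap.isStrictMap_of_isClosed_range [CompleteSpace X] [CompleteSpace Y]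
    (u : X →L[K] Y) (h : IsClosed (u.range : Set Y)) : IsStrictMap u := by
  have : CompleteSpace u.range := h.completeSpace_coe
  let v : X →L[K] u.range := u.codRestrict u.range fun x => ⟨x, rfl⟩
  have hv : Function.Surjective v := fun ⟨_, x, hx⟩ => ⟨x, Subtype.ext hx⟩
  exact LinearMap.isStrictMap_iff_isOpenQuotientMap_rangeRestrict.2
    ⟨hv, v.continuous, v.isOpenMap hv⟩

end ClosedRange

section Complement

variable {K : Type*} [NontriviallyNormedField K]
  {V F : Type*} [NormedAddCommGroup V] [NormedSpace K V] [NormedAddCommGroup F] [NormedSpace K F]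

theorem Submodule.norm_mul_infDist_le_norm_add_smul (D : Submodule K V) (x : V) {u : V}
    (hu : u ∈ D) (c : K) : ‖c‖ * infDist x D ≤ ‖u + c • x‖ := by
  rcases eq_or_ne c 0 with rfl | hc
  · simp
  have hmem : -(c⁻¹ • u) ∈ D := D.neg_mem (D.smul_mem _ hu)
  calc ‖c‖ * infDist x D ≤ ‖c‖ * ‖x - -(c⁻¹ • u)‖ := by
        gcongr
        simpa [dist_eq_norm] using infDist_le_dist_of_mem (x := x) hmem
    _ = ‖u + c • x‖ := by
        rw [← norm_smul, smul_sub, smul_neg, smul_inv_smul₀ hc, sub_neg_eq_add, add_comm]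

theorem Submodule.norm_add_smul_le_of_norm_sub_le [IsUltrametricDist V] (D : Submodule K V)
    {x x₀ : V} {l : ℝ} (hl : 1 ≤ l) (hx₀ : ‖x - x₀‖ ≤ l * infDist x D) {u : V} (hu : u ∈ D)
    (c : K) : ‖u + c • x₀‖ ≤ l * ‖u + c • x‖ := by
  have hc : ‖c • (x₀ - x)‖ ≤ l * ‖u + c • x‖ := by
    calc ‖c • (x₀ - x)‖ = ‖c‖ * ‖x - x₀‖ := by rw [norm_smul, norm_sub_rev]
      _ ≤ ‖c‖ * (l * infDist x D) := by gcongr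
      _ = l * (‖c‖ * infDist x D) := by ring
      _ ≤ l * ‖u + c • x‖ := by gcongr; exact D.norm_mul_infDist_le_norm_add_smul x hu c
  calc ‖u + c • x₀‖ = ‖(u + c • x) + c • (x₀ - x)‖ := by rw [smul_sub]; abel_nf
    _ ≤ max ‖u + c • x‖ ‖c • (x₀ - x)‖ := IsUltrametricDist.norm_add_le_max _ _
    _ ≤ l * ‖u + c • x‖ := max_le (le_mul_of_one_le_left (norm_nonneg _) hl) hc

def LinearPMap.IsBoundedBy (φ : V →ₗ.[K] F) (B : ℝ) : Prop :=
  ∀ z : φ.domain, ‖φ z‖ ≤ B * ‖(z : V)‖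

theorem LinearPMap.IsBoundedBy.mono {φ : V →ₗ.[K] F} {B B' : ℝ} (h : φ.IsBoundedBy B)
    (hB : B ≤ B') : φ.IsBoundedBy B' :=
  fun z => (h z).trans (by gcongr)

theorem LinearPMap.IsBoundedBy.exists_le_mem_closure_domain [IsUltrametricDist V]
    {φ : V →ₗ.[K] F} {B B' : ℝ} (h : φ.IsBoundedBy B) (hB : 0 < B) (hBB' : B < B') (x : V) :
    ∃ ψ, φ ≤ ψ ∧ ψ.IsBoundedBy B' ∧ x ∈ ψ.domain.topologicalClosure := by
  by_cases hx : x ∈ φ.domain.topologicalClosure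
  · exact ⟨φ, le_rfl, h.mono hBB'.le, hx⟩
  have hne : (φ.domain : Set V).Nonempty := ⟨0, φ.domain.zero_mem⟩
  have hd := (infDist_pos_iff_notMem_closure hne).1 (by rwa [← φ.domain.topologicalClosure_coe])
  have hl : 1 < B' / B := (one_lt_div hB).2 hBB'
  obtain ⟨x₀, hx₀, hdist⟩ := (infDist_lt_iff hne).1 (lt_mul_of_one_lt_left hd hl)
  have hxD : x ∉ φ.domain := fun h => hx (φ.domain.le_topologicalClosure h)
  refine ⟨φ.supSpanSingleton x (φ ⟨x₀, hx₀⟩) hxD, LinearPMap.left_le_sup _ _ _, ?_,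
    Submodule.le_topologicalClosure _
      (Submodule.mem_sup_right (Submodule.mem_span_singleton_self x))⟩
  rintro ⟨z, hz⟩
  obtain ⟨u, hu, _, hw, rfl⟩ := Submodule.mem_sup.1 hz
  obtain ⟨c, rfl⟩ := Submodule.mem_span_singleton.1 hw
  rw [LinearPMap.supSpanSingleton_apply_mk _ _ _ _ _ hu, RingHom.id_apply,
    ← LinearPMap.map_smul, ← LinearPMap.map_add]
  calc ‖φ (⟨u, hu⟩ + c • ⟨x₀, hx₀⟩)‖ ≤ B * ‖u + c • x₀‖ := h _
    _ ≤ B * (B' / B * ‖u + c • x‖) := by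
        gcongr
        exact φ.domain.norm_add_smul_le_of_norm_sub_le hl.le
          (by simpa [dist_eq_norm] using hdist.le) hu c
    _ = B' * ‖u + c • x‖ := by field_simp

theorem LinearPMap.IsBoundedBy.sSup_range {φ : ℕ → V →ₗ.[K] F} (hmono : Monotone φ) {B : ℝ}
    (h : ∀ i, (φ i).IsBoundedBy B) :
    (LinearPMap.sSup (Set.range φ) (directedOn_range.2 hmono.directed_le)).IsBoundedBy B := by
  intro z
  obtain ⟨_, ⟨i, rfl⟩, hi⟩ :=
    (LinearPMap.mem_domain_sSup_iff (Set.range_nonempty _) _).1 z.2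
  rw [← (LinearPMap.le_sSup (directedOn_range.2 hmono.directed_le) (Set.mem_range_self i)).2
    (x := ⟨z, hi⟩) rfl]
  exact h i ⟨z, hi⟩

theorem LinearPMap.IsBoundedBy.exists_le_dense_domain [IsUltrametricDist V]
    (hV : CountablyGenerated K V) {φ : V →ₗ.[K] F} {B B' : ℝ} (h : φ.IsBoundedBy B) (hB : 0 < B)
    (hBB' : B < B') : ∃ ψ, φ ≤ ψ ∧ ψ.IsBoundedBy B' ∧ Dense (ψ.domain : Set V) := by
  obtain ⟨s, hsc, hsd⟩ := hV
  obtain ⟨x, hx⟩ := Set.countable_iff_exists_subset_range.1 hsc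
  set b : ℕ → ℝ := fun i => B' - (B' - B) * 2⁻¹ ^ i
  have hb_pos : ∀ i, 0 < b i := fun i => by
    have : (2⁻¹ : ℝ) ^ i ≤ 1 := pow_le_one₀ (by norm_num) (by norm_num)
    simp only [b]
    nlinarith
  have hb_lt : ∀ i, b i < b (i + 1) := fun i => by
    have : (0 : ℝ) < 2⁻¹ ^ i := by positivity
    simp only [b, pow_succ]
    nlinarith
  have hb_le : ∀ i, b i ≤ B' := fun i => by
    have : (0 : ℝ) ≤ 2⁻¹ ^ i := by positivity
    simp only [b]
    nlinarith
  have step : ∀ i (φ : {φ : V →ₗ.[K] F // φ.IsBoundedBy (b i)}),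
      ∃ ψ : {ψ : V →ₗ.[K] F // ψ.IsBoundedBy (b (i + 1))},
        φ.1 ≤ ψ.1 ∧ x i ∈ ψ.1.domain.topologicalClosure := fun i φ => by
    obtain ⟨ψ, hle, hψ, hxψ⟩ := φ.2.exists_le_mem_closure_domain (hb_pos i) (hb_lt i) (x i)
    exact ⟨⟨ψ, hψ⟩, hle, hxψ⟩
  choose next hnext using step
  let chain : ∀ i, {φ : V →ₗ.[K] F // φ.IsBoundedBy (b i)} :=
    fun i => Nat.rec ⟨φ, by simpa [b] using h⟩ next i
  have hmono : Monotone fun i => (chain i).1 :=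
    monotone_nat_of_le_succ fun i => (hnext i (chain i)).1
  have hdir := directedOn_range.2 hmono.directed_le
  have hle : ∀ i, (chain i).1 ≤ LinearPMap.sSup _ hdir := fun i => LinearPMap.le_sSup hdir ⟨i, rfl⟩
  refine ⟨LinearPMap.sSup _ hdir, hle 0,
    LinearPMap.IsBoundedBy.sSup_range hmono fun i => (chain i).2.mono (hb_le i), ?_⟩
  rw [← dense_closure, ← Submodule.topologicalClosure_coe]
  refine hsd.mono (Submodule.span_le.2 fun _ hxs => ?_)
  obtain ⟨i, rfl⟩ := hx hxs
  exact Submodule.topologicalClosure_mono (hle (i + 1)).1 (hnext i (chain i)).2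

theorem LinearPMap.IsBoundedBy.exists_extension [CompleteSpace F] {φ : V →ₗ.[K] F} {B : ℝ}
    (h : φ.IsBoundedBy B) (hd : Dense (φ.domain : Set V)) :
    ∃ T : V →L[K] F, ∀ z : φ.domain, T z = φ z := by
  let φc : φ.domain →L[K] F := φ.toFun.mkContinuous B h
  exact ⟨φc.extend φ.domain.subtypeL,
    φc.extend_eq hd.denseRange_val isUniformEmbedding_subtype_val.isUniformInducing⟩

theorem Submodule.closedComplemented_of_isClosed [IsUltrametricDist V] [CompleteSpace V]
    (hV : CountablyGenerated K V) {N : Submodule K V} (hN : IsClosed (N : Set V)) :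
    N.ClosedComplemented := by
  have : CompleteSpace N := hN.completeSpace_coe
  let φ : V →ₗ.[K] N := ⟨N, LinearMap.id⟩
  have hφ : φ.IsBoundedBy 1 := fun z => by simp [φ]
  obtain ⟨ψ, hle, hψ, hd⟩ := hφ.exists_le_dense_domain hV one_pos one_lt_two
  obtain ⟨T, hT⟩ := hψ.exists_extension hd
  exact ⟨T, fun n => (hT ⟨n, hle.1 n.2⟩).trans (hle.2 rfl).symm⟩

end Complement

theorem ContinuousLinearMap.isFredholm_of_finiteDimensional_ker_coker {K : Type*}
    [NontriviallyNormedField K] {X Y : Type*} [NormedAddCommGroup X] [NormedSpace K X]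
    [CompleteSpace X] [IsUltrametricDist X] [NormedAddCommGroup Y] [NormedSpace K Y]
    [CompleteSpace Y] (hX : CountablyGenerated K X) (u : X →L[K] Y)
    [FiniteDimensional K u.ker] [FiniteDimensional K (Y ⧸ u.range)] : u.IsFredholm where
  isStrictMap := u.isStrictMap_of_isClosed_range u.isClosed_range_of_finiteDimensional_quotient
  isClosed_range := u.isClosed_range_of_finiteDimensional_quotient
  finite_ker := ‹_›
  finite_coker := ‹_›
  closedComplemented_ker := Submodule.closedComplemented_of_isClosed hX u.isClosed_ker

theorem exists_approximate_inverse_general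
    {K : Type*} [NontriviallyNormedField K]
    {V V' : Type*} [NormedAddCommGroup V] [NormedSpace K V] [CompleteSpace V]
    [IsUltrametricDist V]
    [NormedAddCommGroup V'] [NormedSpace K V'] [CompleteSpace V'] [IsUltrametricDist V']
    (hsepV : CountablyGenerated K V) (hsepV' : CountablyGenerated K V')
    (f : V →L[K] V')
    (hker : FiniteDimensional K ↥(LinearMap.ker (f : V →ₗ[K] V')))
    (hcoker : FiniteDimensional K (V' ⧸ LinearMap.range (f : V →ₗ[K] V'))) :
    ∃ g : V' →L[K] V,
      FiniteDimensional K
        ↥(LinearMap.range ((f.comp g - ContinuousLinearMap.id K V') : V' →ₗ[K] V')) ∧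
      FiniteDimensional K
        ↥(LinearMap.range ((g.comp f - ContinuousLinearMap.id K V) : V →ₗ[K] V)) := by
  have hf := f.isFredholm_of_finiteDimensional_ker_coker hsepV
  obtain ⟨C, hC⟩ :=
    (Submodule.closedComplemented_of_isClosed hsepV' hf.isClosed_range).exists_isTopCompl
  obtain ⟨D, hD⟩ := hf.closedComplemented_ker.exists_isTopCompl
  let pkg := hf.fredholmPackage hD hC
  have hg := pkg.isQuasiInverse
  exact ⟨pkg.quasiInverse, hg.2.isLeftQuasiInverse.finiteDimensional_range_comp_sub_id,
    hg.1.finiteDimensional_range_comp_sub_id⟩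

/-- If `f : V → V'` is a continuous linear map of separable Banach
spaces over a nonarchimedean field with finite-dimensional kernel and cokernel, then
there is a continuous linear `g : V' → V` such that both `f ∘ g - id` and
`g ∘ f - id` have finite rank. -/
theorem exists_approximate_inverse
    {K : Type*} [NontriviallyNormedField K] [IsUltrametricDist K]
    {V V' : Type*} [NormedAddCommGroup V] [NormedSpace K V] [CompleteSpace V]
    [IsUltrametricDist V]
    [NormedAddCommGroup V'] [NormedSpace K V'] [CompleteSpace V'] [IsUltrametricDist V']
    (hsepV : CountablyGenerated K V) (hsepV' : CountablyGenerated K V')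
    (f : V →L[K] V')
    (hker : FiniteDimensional K ↥(LinearMap.ker (f : V →ₗ[K] V')))
    (hcoker : FiniteDimensional K (V' ⧸ LinearMap.range (f : V →ₗ[K] V'))) :
    ∃ g : V' →L[K] V,
      FiniteDimensional K
        ↥(LinearMap.range ((f.comp g - ContinuousLinearMap.id K V') : V' →ₗ[K] V')) ∧
      FiniteDimensional K
        ↥(LinearMap.range ((g.comp f - ContinuousLinearMap.id K V) : V →ₗ[K] V)) :=
  exists_approximate_inverse_general hsepV hsepV' f hker hcoker
end
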